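/- arXiv:1901.04576 — 5 statements merged into one kernel-verified Lean document; each statement's English description precedes it below -/
import Mathlib

section
/- Let n ≥ 2 and m ≥ 3. Then the polynomial x₁^n + x₂^n + x₃^n ∈ ℂ[x₁,…,x_m] cannot be written as a product of homogeneous polynomials of degree 1; that is, there are no homogeneous degree-1 polynomials g₁,…,g_n ∈ ℂ[x₁,…,x_m] with x₁^n + x₂^n + x₃^n = g₁·g₂·⋯·g_n. -/
/-!
Evaluating the factorisation at a point where one linear factor vanishes shows that
`x^n + y^n + z^n` would vanish on a whole plane of `ℂ³`. It does not: if it vanished at all points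
`(1, t, u + v t)` of the plane, then `t = 0` gives `u^n = -1`, and then `t = u (ζ - 1) / v`, for an
`n`-th root of unity `ζ ≠ 1`, gives `t^n = 0`.
-/

open MvPolynomial

variable {K : Type*} [Field K] {n : ℕ} {ζ : K}

theorem exists_one_add_pow_add_pow_ne_zero (hζ : IsPrimitiveRoot ζ n) (hn : 1 < n) (u v : K) :
    ∃ t : K, 1 + t ^ n + (u + v * t) ^ n ≠ 0 := by
  by_contra! h
  have hn₀ : n ≠ 0 := by omega
  have hu : u ^ n = -1 := by
    linear_combination (by simpa [zero_pow hn₀] using h 0 : 1 + u ^ n = 0)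
  rcases eq_or_ne v 0 with rfl | hv
  · have h1 := h 1
    rw [one_pow, zero_mul, add_zero, hu] at h1
    norm_num at h1
  · set t := u * (ζ - 1) / v
    have hut : u + v * t = u * ζ := by rw [mul_div_cancel₀ _ hv]; ring
    have ht : t ^ n = 0 := by
      have h' := h t
      rw [hut, mul_pow, hζ.pow_eq_one, mul_one, hu] at h'
      linear_combination h'
    have hu0 : u ≠ 0 := by rintro rfl; simp [zero_pow hn₀] at hu
    exact div_ne_zero (mul_ne_zero hu0 (sub_ne_zero.mpr (hζ.ne_one hn))) hv
      (pow_eq_zero_iff hn₀ |>.mp ht)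

theorem exists_fermat_ne_zero_of_linear_eq_zero (hζ : IsPrimitiveRoot ζ n) (hn : 1 < n)
    (α β γ : K) : ∃ x y z : K, α * x + β * y + γ * z = 0 ∧ x ^ n + y ^ n + z ^ n ≠ 0 := by
  rcases eq_or_ne γ 0 with rfl | hγ
  · exact ⟨0, 0, 1, by ring, by simp [zero_pow (by omega : n ≠ 0)]⟩
  · obtain ⟨t, ht⟩ := exists_one_add_pow_add_pow_ne_zero hζ hn (-α / γ) (-β / γ)
    exact ⟨1, t, -α / γ + -β / γ * t, by field_simp; ring, by rwa [one_pow]⟩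

theorem MvPolynomial.IsHomogeneous.exists_eq_sum_smul_X {σ R : Type*} [Fintype σ]
    [CommSemiring R] {g : MvPolynomial σ R} (hg : g.IsHomogeneous 1) :
    ∃ c : σ → R, g = ∑ i, c i • X i := by
  rw [← mem_homogeneousSubmodule, homogeneousSubmodule_one_eq_span_X,
    Submodule.mem_span_range_iff_exists_fun] at hg
  obtain ⟨c, hc⟩ := hg
  exact ⟨c, hc.symm⟩

/-- Let `n ≥ 2` and `m ≥ 3`.  Then `x₁^n + x₂^n + x₃^n ∈ ℂ[x₁,…,x_m]` cannot be
written as a product of `n` homogeneous polynomials of degree 1. -/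
theorem fermat_not_in_chow
    (m n : ℕ) (hn : 2 ≤ n) (hm : 3 ≤ m) :
    ¬ ∃ g : Fin n → MvPolynomial (Fin m) ℂ,
        (∀ i, (g i).IsHomogeneous 1) ∧
        (MvPolynomial.X (⟨0, by omega⟩ : Fin m)) ^ n +
          (MvPolynomial.X (⟨1, by omega⟩ : Fin m)) ^ n +
          (MvPolynomial.X (⟨2, by omega⟩ : Fin m)) ^ n = ∏ i, g i := by
  rintro ⟨g, hg, hfactor⟩
  let i₀ : Fin n := ⟨0, by omega⟩
  obtain ⟨c, hc⟩ := (hg i₀).exists_eq_sum_smul_X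
  have hζ := Complex.isPrimitiveRoot_exp n (by omega)
  obtain ⟨x, y, z, hplane, hxyz⟩ := exists_fermat_ne_zero_of_linear_eq_zero hζ hn
    (c ⟨0, by omega⟩) (c ⟨1, by omega⟩) (c ⟨2, by omega⟩)
  let p : Fin m → ℂ :=
    Pi.single ⟨0, by omega⟩ x + Pi.single ⟨1, by omega⟩ y + Pi.single ⟨2, by omega⟩ z
  have hg₀ : eval p (g i₀) = 0 := by
    simpa [hc, p, Pi.single_apply, mul_add, Finset.sum_add_distrib] using hplane
  apply hxyz
  have h := congrArg (eval p) hfactor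
  rw [map_prod, Finset.prod_eq_zero (Finset.mem_univ i₀) hg₀] at h
  simpa [p, Pi.single_apply] using h
end

section
/- Fix integers n ≥ 1, d ≥ 1 and k ≥ 0 with k ≤ dn, and set L := dn − k. Then c_{(L,k,0)}(d,n) = p_k(d,n), i.e. the number of finitely supported functions b from the weak compositions of n into 3 parts to ℕ with Σ_α b(α) = d and Σ_α b(α)·α = (L,k,0) equals the number of partitions of k with at most d parts, each part of size at most n. -/
/-- `cCoeff d n ν` is the number of finitely supported functions `b` from the weak compositions
of `n` into 3 parts to `ℕ` with `Σ_α b(α) = d` and `Σ_α b(α)·α = ν` (componentwise). -/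
noncomputable def cCoeff (d n : ℕ) (ν : Fin 3 → ℤ) : ℕ :=
  Nat.card {b : (Fin 3 → ℕ) →₀ ℕ //
    (∀ α ∈ b.support, ∑ i, α i = n) ∧
    b.sum (fun _ c => c) = d ∧
    ∀ i : Fin 3, b.sum (fun α c => (c : ℤ) * (α i : ℤ)) = ν i}

/-- `pBox a b k` is the number of partitions of `k` with at most `a` parts, each part of size at
most `b` (represented as antitone `a`-tuples). -/
noncomputable def pBox (a b : ℕ) (k : ℤ) : ℕ :=
  Nat.card {μ : Fin a → ℕ // Antitone μ ∧ (∀ i, μ i ≤ b) ∧ (∑ i, (μ i : ℤ)) = k}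

/-- The plethysm coefficient `a_λ(d[n])` for a partition `λ` with at most 3 parts, defined via
the Jacobi–Trudi alternating sum. -/
noncomputable def aCoeff (lam : Fin 3 → ℕ) (d n : ℕ) : ℤ :=
  ∑ π : Equiv.Perm (Fin 3),
    (Equiv.Perm.sign π : ℤ) *
      (cCoeff d n (fun i => (lam i : ℤ) - (i : ℕ) + ((π i : ℕ) : ℤ)) : ℤ)

/-! ### Auxiliary material -/

lemma sum_toMultiset_map {α : Type*} {M : Type*} [AddCommMonoid M] (f : α →₀ ℕ) (g : α → M) :
    (f.toMultiset.map g).sum = f.sum fun a c => c • g a := by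
  induction f using Finsupp.induction with
  | zero => simp
  | single_add a n f _ _ ih =>
    rw [Finsupp.toMultiset_add, Multiset.map_add, Multiset.sum_add, ih,
      Finsupp.sum_add_index' (h := fun a c => c • g a) (fun a => zero_nsmul (g a))
        (fun a m₁ m₂ => add_nsmul (g a) m₁ m₂),
      Finsupp.toMultiset_single, Finsupp.sum_single_index (zero_nsmul (g a)),
      Multiset.nsmul_singleton, Multiset.map_replicate, Multiset.sum_replicate]

/-- The intermediate combinatorial object: multisets of `d` numbers, each at most `n`,
with sum `k`. -/
abbrev msetType (n d k : ℕ) : Type :=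
  {m : Multiset ℕ // (∀ x ∈ m, x ≤ n) ∧ Multiset.card m = d ∧ m.sum = k}

/-- The `cCoeff` subtype for `ν = (dn-k, k, 0)` is in bijection with `msetType n d k`. -/
noncomputable def equivMset (n d k : ℕ) (hk : k ≤ d * n) :
    {b : (Fin 3 → ℕ) →₀ ℕ //
      (∀ α ∈ b.support, ∑ i, α i = n) ∧
      b.sum (fun _ c => c) = d ∧
      ∀ i : Fin 3, b.sum (fun α c => (c : ℤ) * (α i : ℤ)) =
        ![(d * n : ℤ) - (k : ℤ), (k : ℤ), 0] i} ≃ msetType n d k := by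
  classical
  -- key translation of the weighted-sum conditions to multiset form
  have key : ∀ (b : (Fin 3 → ℕ) →₀ ℕ) (i : Fin 3),
      b.sum (fun α c => (c : ℤ) * (α i : ℤ))
        = (((b.toMultiset.map fun α => α i).sum : ℕ) : ℤ) := by
    intro b i
    rw [Nat.cast_multiset_sum, Multiset.map_map, sum_toMultiset_map]
    simp [nsmul_eq_mul]
  refine
    { toFun := fun b => ⟨b.1.toMultiset.map (fun α => α 1), ?_, ?_, ?_⟩
      invFun := fun m => ⟨(m.1.map (fun j => ![n - j, j, 0])).toFinsupp, ?_, ?_, ?_⟩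
      left_inv := ?_
      right_inv := ?_ }
  · -- all entries ≤ n
    intro x hx
    obtain ⟨α, hα, rfl⟩ := Multiset.mem_map.mp hx
    have h := b.2.1 α (by rwa [← Finsupp.mem_toMultiset])
    rw [Fin.sum_univ_three] at h
    omega
  · -- card = d
    rw [Multiset.card_map, Finsupp.card_toMultiset]
    exact b.2.2.1
  · -- sum = k
    have h1 := b.2.2.2 1
    rw [key] at h1
    simp only [Matrix.cons_val_one, Matrix.head_cons, Matrix.cons_val_zero] at h1
    exact_mod_cast h1
  · -- support condition for invFun
    intro α hα
    rw [Multiset.toFinsupp_support, Multiset.mem_toFinset, Multiset.mem_map] at hα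
    obtain ⟨j, hj, rfl⟩ := hα
    have hjn : j ≤ n := m.2.1 j hj
    rw [Fin.sum_univ_three]
    simp [Matrix.cons_val_zero, Matrix.cons_val_one, Matrix.head_cons]
    omega
  · -- total = d
    rw [show (fun (_ : Fin 3 → ℕ) (c : ℕ) => c) = (fun _ => id) from rfl,
      ← Finsupp.card_toMultiset, Multiset.toFinsupp_toMultiset, Multiset.card_map]
    exact m.2.2.1
  · -- weighted sums
    intro i
    rw [key, Multiset.toFinsupp_toMultiset, Multiset.map_map]
    obtain ⟨hle, hcard, hsum⟩ := m.2
    fin_cases i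
    · have H : (((m.1.map fun j => (![n - j, j, 0] : Fin 3 → ℕ) 0).sum : ℕ) : ℤ)
          = (d * n : ℤ) - (k : ℤ) := by
        have h1 : (m.1.map fun j => (![n - j, j, 0] : Fin 3 → ℕ) 0) = m.1.map fun j => n - j := by
          apply Multiset.map_congr rfl; intro j _; simp
        rw [h1, Nat.cast_multiset_sum, Multiset.map_map]
        have hcast : m.1.map ((Nat.cast : ℕ → ℤ) ∘ fun j => n - j)
            = m.1.map fun j : ℕ => (n : ℤ) - (j : ℤ) := by
          apply Multiset.map_congr rfl
          intro j hj
          have := hle j hj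
          simp only [Function.comp_apply]
          rw [Nat.cast_sub this]
        rw [hcast]
        have hadd := Multiset.sum_map_add (m := m.1) (f := fun j : ℕ => (n : ℤ) - (j : ℤ))
          (g := fun j : ℕ => (j : ℤ))
        simp only [sub_add_cancel] at hadd
        have hconst : (Multiset.map (fun _ : ℕ => (n : ℤ)) m.1).sum = (d : ℤ) * n := by
          rw [Multiset.map_const', Multiset.sum_replicate, hcard]
          push_cast
          ring
        have hj : (Multiset.map (fun j : ℕ => (j : ℤ)) m.1).sum = (k : ℤ) := by
          rw [← Nat.cast_multiset_sum, hsum]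
        rw [hconst, hj] at hadd
        omega
      exact H
    · have H : (((m.1.map fun j => (![n - j, j, 0] : Fin 3 → ℕ) 1).sum : ℕ) : ℤ) = (k : ℤ) := by
        have h1 : (m.1.map fun j => (![n - j, j, 0] : Fin 3 → ℕ) 1) = m.1.map id := by
          apply Multiset.map_congr rfl; intro j _; simp
        rw [h1, Multiset.map_id, hsum]
      exact H
    · have H : (((m.1.map fun j => (![n - j, j, 0] : Fin 3 → ℕ) 2).sum : ℕ) : ℤ) = 0 := by
        have h1 : (m.1.map fun j => (![n - j, j, 0] : Fin 3 → ℕ) 2) = m.1.map fun _ => 0 := by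
          apply Multiset.map_congr rfl; intro j _; simp
        rw [h1]
        simp
      exact H
  · -- left inverse
    rintro ⟨b, hb1, hb2, hb3⟩
    ext1
    dsimp only
    rw [Multiset.map_map]
    -- every α in the support has α 2 = 0 and α 0 = n - α 1
    have hzero : ∀ α ∈ b.toMultiset, α 2 = 0 := by
      have h2 := hb3 2
      rw [key] at h2
      simp only [Matrix.cons_val_two, Matrix.tail_cons, Matrix.head_cons] at h2
      have h2' : (b.toMultiset.map fun α => α 2).sum = 0 := by exact_mod_cast h2
      intro α hα
      exact Multiset.sum_eq_zero_iff.mp h2' (α 2) (Multiset.mem_map_of_mem _ hα)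
    have hid : ∀ α ∈ b.toMultiset, ((fun j => ![n - j, j, 0]) ∘ fun α => α 1) α = α := by
      intro α hα
      have hs := hb1 α (by rwa [← Finsupp.mem_toMultiset])
      rw [Fin.sum_univ_three] at hs
      have h2 := hzero α hα
      funext i
      fin_cases i <;> simp <;> omega
    rw [Multiset.map_congr rfl hid, Multiset.map_id', Finsupp.toMultiset_toFinsupp]
  · -- right inverse
    rintro ⟨m, hm⟩
    ext1
    dsimp only
    rw [Multiset.toFinsupp_toMultiset, Multiset.map_map]
    have : ∀ j ∈ m, ((fun α : Fin 3 → ℕ => α 1) ∘ fun j => ![n - j, j, 0]) j = id j := by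
      intro j _; simp
    rw [Multiset.map_congr rfl this, Multiset.map_id]

lemma ofFn_get_cast {α : Type*} (l : List α) {d : ℕ} (h : d = l.length) :
    List.ofFn (fun i : Fin d => l.get (Fin.cast h i)) = l := by
  subst h
  exact List.ofFn_get l

/-- `msetType n d k` is in bijection with antitone `d`-tuples bounded by `n` summing to `k`. -/
noncomputable def msetEquivTuples (n d k : ℕ) :
    msetType n d k ≃
      {μ : Fin d → ℕ // Antitone μ ∧ (∀ i, μ i ≤ n) ∧ (∑ i, (μ i : ℤ)) = (k : ℤ)} := by
  classical
  have hlen : ∀ m : msetType n d k, d = (Multiset.sort m.1 (· ≥ ·)).length := by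
    intro m
    rw [Multiset.length_sort, m.2.2.1]
  refine
    { toFun := fun m => ⟨fun i => (Multiset.sort m.1 (· ≥ ·)).get (Fin.cast (hlen m) i),
        ?_, ?_, ?_⟩
      invFun := fun μ => ⟨(List.ofFn μ.1 : List ℕ), ?_, ?_, ?_⟩
      left_inv := ?_
      right_inv := ?_ }
  · -- antitone
    intro i j hij
    exact (Multiset.pairwise_sort m.1 (· ≥ ·)).rel_get_of_le (by simpa using hij)
  · -- bounded by n
    intro i
    exact m.2.1 _ ((Multiset.mem_sort _).mp (by apply List.get_mem))
  · -- sum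
    have : (List.ofFn fun i : Fin d =>
        (Multiset.sort m.1 (· ≥ ·)).get (Fin.cast (hlen m) i)) = Multiset.sort m.1 (· ≥ ·) :=
      ofFn_get_cast _ (hlen m)
    have hsum : (∑ i : Fin d, (Multiset.sort m.1 (· ≥ ·)).get (Fin.cast (hlen m) i)) = k := by
      rw [← List.sum_ofFn, this]
      have := Multiset.sort_eq m.1 (· ≥ ·)
      calc (Multiset.sort m.1 (· ≥ ·)).sum
          = ((Multiset.sort m.1 (· ≥ ·) : List ℕ) : Multiset ℕ).sum := by
            rw [Multiset.sum_coe]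
        _ = m.1.sum := by rw [this]
        _ = k := m.2.2.2
    exact_mod_cast congrArg (Nat.cast : ℕ → ℤ) hsum
  · -- membership bound for invFun
    intro x hx
    rw [Multiset.mem_coe, List.mem_ofFn] at hx
    obtain ⟨i, rfl⟩ := hx
    exact μ.2.2.1 i
  · -- card
    simp
  · -- sum
    have : (List.ofFn μ.1).sum = k := by
      have := μ.2.2.2
      rw [List.sum_ofFn]
      exact_mod_cast (by push_cast; exact this : ((∑ i, μ.1 i : ℕ) : ℤ) = (k : ℤ))
    simpa using this
  · -- left inverse
    rintro ⟨m, hm⟩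
    ext1
    dsimp only
    rw [ofFn_get_cast _ (hlen ⟨m, hm⟩)]
    exact Multiset.sort_eq _ _
  · -- right inverse
    rintro ⟨μ, hmono, hbd, hsum⟩
    ext i
    dsimp only
    have hsorted : (List.ofFn μ).Pairwise (· ≥ ·) := by
      rw [List.pairwise_ofFn]
      intro i j hij
      exact hmono hij.le
    have hperm : (Multiset.sort ((List.ofFn μ : List ℕ) : Multiset ℕ) (· ≥ ·)).Perm
        (List.ofFn μ) := by
      rw [← Multiset.coe_eq_coe, Multiset.sort_eq]
    have heq : Multiset.sort ((List.ofFn μ : List ℕ) : Multiset ℕ) (· ≥ ·) = List.ofFn μ :=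
      List.Perm.eq_of_pairwise' (Multiset.pairwise_sort _ _) hsorted hperm
    rw [List.get_of_eq heq, List.get_ofFn]
    exact congrArg μ (Fin.ext rfl)

/-- For `n ≥ 1`, `d ≥ 1`, `0 ≤ k ≤ dn` and `L := dn − k` one has
`c_{(L,k,0)}(d,n) = p_k(d,n)`. -/
theorem cCoeff_L_k_zero (n d k : ℕ) (hn : 1 ≤ n) (hd : 1 ≤ d) (hk : k ≤ d * n) :
    cCoeff d n ![(d * n : ℤ) - (k : ℤ), (k : ℤ), 0] = pBox d n (k : ℤ) := by
  rw [cCoeff, pBox]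
  exact Nat.card_congr ((equivMset n d k hk).trans (msetEquivTuples n d k))
end

section
/- Fix integers n ≥ 1, d ≥ 1 and k ≥ 0 with k + 1 ≤ dn, and set L := dn − k − 1. Then c_{(L,k,1)}(d,n) = Σ_{r=0}^{n−1} p_{k−r}(d−1, n). -/
namespace CLaux

/-- The composition `(n - j, j, 0)`. -/
def cJ (n j : ℕ) : Fin 3 → ℕ := ![n - j, j, 0]

/-- The composition `(n - 1 - r, r, 1)`. -/
def c0 (n r : ℕ) : Fin 3 → ℕ := ![n - 1 - r, r, 1]

lemma cJ_zero (n j : ℕ) : cJ n j 0 = n - j := rfl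
lemma cJ_one (n j : ℕ) : cJ n j 1 = j := rfl
lemma cJ_two (n j : ℕ) : cJ n j 2 = 0 := rfl
lemma c0_zero (n r : ℕ) : c0 n r 0 = n - 1 - r := rfl
lemma c0_one (n r : ℕ) : c0 n r 1 = r := rfl
lemma c0_two (n r : ℕ) : c0 n r 2 = 1 := rfl

lemma cJ_inj {n : ℕ} : Function.Injective (cJ n) := fun a b h => by
  have := congrFun h 1; simpa [cJ_one] using this

lemma c0_inj {n : ℕ} : Function.Injective (c0 n) := fun a b h => by
  have := congrFun h 1; simpa [c0_one] using this

lemma c0_ne_cJ (n r j : ℕ) : c0 n r ≠ cJ n j := fun h => by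
  have := congrFun h 2; simp [c0_two, cJ_two] at this

lemma sum_c0 {n r : ℕ} (hr : r + 1 ≤ n) : ∑ i, c0 n r i = n := by
  rw [Fin.sum_univ_three, c0_zero, c0_one, c0_two]; omega

lemma sum_cJ {n j : ℕ} (hj : j ≤ n) : ∑ i, cJ n j i = n := by
  rw [Fin.sum_univ_three, cJ_zero, cJ_one, cJ_two]; omega

open Finsupp in
lemma finsuppSum_finsetSum {ι A M : Type*} [AddCommMonoid M]
    (s : Finset ι) (g : ι → (A →₀ ℕ)) (f : A → ℕ → M)
    (h0 : ∀ a, f a 0 = 0) (hadd : ∀ a b₁ b₂, f a (b₁ + b₂) = f a b₁ + f a b₂) :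
    (∑ i ∈ s, g i).sum f = ∑ i ∈ s, (g i).sum f := by
  classical
  induction s using Finset.cons_induction with
  | empty => simp [Finsupp.sum_zero_index]
  | cons a s ha ih =>
    rw [Finset.sum_cons, Finsupp.sum_add_index' h0 hadd, ih, Finset.sum_cons]

/-- The finsupp associated to `(r, μ)`. -/
noncomputable def Phi (n : ℕ) {a : ℕ} (r : ℕ) (μ : Fin a → ℕ) : (Fin 3 → ℕ) →₀ ℕ :=
  Finsupp.single (c0 n r) 1 + ∑ i, Finsupp.single (cJ n (μ i)) 1

lemma Phi_apply (n : ℕ) {a : ℕ} (r : ℕ) (μ : Fin a → ℕ) (α : Fin 3 → ℕ) :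
    Phi n r μ α = (if c0 n r = α then 1 else 0) + ∑ i, if cJ n (μ i) = α then 1 else 0 := by
  classical
  rw [Phi, Finsupp.add_apply, Finsupp.finset_sum_apply]
  simp [Finsupp.single_apply]

lemma Phi_sum (n : ℕ) {a : ℕ} (r : ℕ) (μ : Fin a → ℕ) {M : Type*} [AddCommMonoid M]
    (f : (Fin 3 → ℕ) → ℕ → M)
    (h0 : ∀ a, f a 0 = 0) (hadd : ∀ a b₁ b₂, f a (b₁ + b₂) = f a b₁ + f a b₂) :
    (Phi n r μ).sum f = f (c0 n r) 1 + ∑ i, f (cJ n (μ i)) 1 := by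
  classical
  rw [Phi, Finsupp.sum_add_index' h0 hadd, Finsupp.sum_single_index (h0 _),
    finsuppSum_finsetSum _ _ _ h0 hadd]
  congr 1
  exact Finset.sum_congr rfl fun i _ => Finsupp.sum_single_index (h0 _)

lemma count_ofFn {a : ℕ} (μ : Fin a → ℕ) (v : ℕ) :
    (List.ofFn μ).count v = ∑ i, if μ i = v then 1 else 0 := by
  induction a with
  | zero => simp
  | succ a ih =>
    rw [List.ofFn_succ, List.count_cons, Fin.sum_univ_succ, ih]
    rw [add_comm]
    congr 1
    simp [beq_iff_eq]

lemma antitone_ext {a : ℕ} {μ μ' : Fin a → ℕ} (hμ : Antitone μ) (hμ' : Antitone μ')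
    (h : ∀ v, (List.ofFn μ).count v = (List.ofFn μ').count v) : μ = μ' := by
  have hp : (List.ofFn μ).Perm (List.ofFn μ') := List.perm_iff_count.2 h
  have hs : (List.ofFn μ).Pairwise (· ≥ ·) := List.pairwise_ofFn.2 fun i j hij => hμ hij.le
  have hs' : (List.ofFn μ').Pairwise (· ≥ ·) := List.pairwise_ofFn.2 fun i j hij => hμ' hij.le
  exact List.ofFn_injective (List.Perm.eq_of_pairwise' hs hs' hp)

end CLaux

open CLaux in
/-- For `n ≥ 1`, `d ≥ 1`, `k ≥ 0` with `k + 1 ≤ dn` and `L := dn − k − 1` one has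
`c_{(L,k,1)}(d,n) = Σ_{r=0}^{n−1} p_{k−r}(d−1, n)`. -/
theorem cCoeff_L_k_one (n d k : ℕ) (hn : 1 ≤ n) (hd : 1 ≤ d) (hk : k + 1 ≤ d * n) :
    cCoeff d n ![(d * n : ℤ) - (k : ℤ) - 1, (k : ℤ), 1] =
      ∑ r ∈ Finset.range n, pBox (d - 1) n ((k : ℤ) - (r : ℤ)) := by
  classical
  set ν : Fin 3 → ℤ := ![(d * n : ℤ) - (k : ℤ) - 1, (k : ℤ), 1] with hν
  have hν0 : ν 0 = (d * n : ℤ) - (k : ℤ) - 1 := rfl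
  have hν1 : ν 1 = (k : ℤ) := rfl
  have hν2 : ν 2 = 1 := rfl
  -- the fibers
  set P : Fin n → Type := fun r =>
    {μ : Fin (d - 1) → ℕ // Antitone μ ∧ (∀ i, μ i ≤ n) ∧ (∑ i, (μ i : ℤ)) = (k : ℤ) - ((r : ℕ) : ℤ)}
    with hP
  set S : Type := {b : (Fin 3 → ℕ) →₀ ℕ //
    (∀ α ∈ b.support, ∑ i, α i = n) ∧
    b.sum (fun _ c => c) = d ∧
    ∀ i : Fin 3, b.sum (fun α c => (c : ℤ) * (α i : ℤ)) = ν i} with hS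
  -- the map
  have hmem : ∀ (r : Fin n) (μ : P r), (∀ α ∈ (Phi n (r : ℕ) μ.1).support, ∑ i, α i = n) ∧
      (Phi n (r : ℕ) μ.1).sum (fun _ c => c) = d ∧
      ∀ i : Fin 3, (Phi n (r : ℕ) μ.1).sum (fun α c => (c : ℤ) * (α i : ℤ)) = ν i := by
    rintro r ⟨μ, hμa, hμn, hμs⟩
    have hr : (r : ℕ) + 1 ≤ n := r.2
    refine ⟨?_, ?_, ?_⟩
    · intro α hα
      have hne : Phi n (r : ℕ) μ α ≠ 0 := Finsupp.mem_support_iff.mp hα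
      rw [Phi_apply] at hne
      by_cases h1 : c0 n (r : ℕ) = α
      · exact h1 ▸ sum_c0 hr
      · have h2 : ∃ i, cJ n (μ i) = α := by
          by_contra h2
          push_neg at h2
          simp only [if_neg h1, if_neg (h2 _)] at hne
          simp at hne
        obtain ⟨i, rfl⟩ := h2
        exact sum_cJ (hμn i)
    · rw [Phi_sum n (r : ℕ) μ (fun _ c => c) (fun _ => rfl) (fun _ _ _ => rfl)]
      simp only [Finset.sum_const, Finset.card_univ, Fintype.card_fin, smul_eq_mul, mul_one]
      omega
    · intro i
      rw [Phi_sum n (r : ℕ) μ _ (fun a => by simp) (fun a b₁ b₂ => by push_cast; ring)]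
      fin_cases i <;> simp only [Fin.zero_eta, Fin.mk_one, Fin.reduceFinMk]
      · rw [hν0]
        simp only [c0_zero, cJ_zero, Nat.cast_one, one_mul]
        have h1 : ((n - 1 - (r : ℕ) : ℕ) : ℤ) = (n : ℤ) - 1 - (r : ℕ) := by omega
        have h2 : ∀ i, ((n - μ i : ℕ) : ℤ) = (n : ℤ) - μ i := fun i => by have := hμn i; omega
        rw [h1, Finset.sum_congr rfl fun i _ => h2 i, Finset.sum_sub_distrib, hμs,
          Finset.sum_const, Finset.card_univ, Fintype.card_fin, nsmul_eq_mul]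
        have h3 : ((d - 1 : ℕ) : ℤ) = (d : ℤ) - 1 := by omega
        rw [h3]; ring
      · rw [hν1]
        simp only [c0_one, cJ_one, Nat.cast_one, one_mul, hμs]
        ring
      · rw [hν2]
        simp only [c0_two, cJ_two, Nat.cast_one, Nat.cast_zero, one_mul, mul_zero,
          Finset.sum_const_zero]
        ring
  set Φ : ((r : Fin n) × P r) → S := fun x => ⟨Phi n (x.1 : ℕ) x.2.1, hmem x.1 x.2⟩ with hΦdef
  have hinj : Function.Injective Φ := by
    rintro ⟨r, μ, hμa, hμn, hμs⟩ ⟨r', μ', hμa', hμn', hμs'⟩ h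
    have heq : Phi n (r : ℕ) μ = Phi n (r' : ℕ) μ' := congrArg Subtype.val h
    -- first components agree
    have hr : r = r' := by
      have h1 : Phi n (r : ℕ) μ (c0 n (r : ℕ)) = Phi n (r' : ℕ) μ' (c0 n (r : ℕ)) := by
        rw [heq]
      rw [Phi_apply, Phi_apply, if_pos rfl,
        Finset.sum_eq_zero (fun i _ => if_neg (Ne.symm (c0_ne_cJ n (r : ℕ) (μ i)))),
        Finset.sum_eq_zero (fun i _ => if_neg (Ne.symm (c0_ne_cJ n (r : ℕ) (μ' i))))] at h1
      by_contra hne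
      have hrr' : (r' : ℕ) ≠ (r : ℕ) := fun hc => hne (Fin.ext hc).symm
      rw [if_neg (fun hc => hrr' (c0_inj hc))] at h1
      simp at h1
    subst hr
    have hμeq : μ = μ' := by
      apply antitone_ext hμa hμa'
      intro v
      have h1 := congrArg (fun b => b (cJ n v)) heq
      simp only [Phi_apply] at h1
      rw [if_neg (c0_ne_cJ n _ _)] at h1
      rw [count_ofFn, count_ofFn]
      simpa [cJ_inj.eq_iff] using h1
    subst hμeq
    rfl
  have hsurj : Function.Surjective Φ := by
    rintro ⟨b, hb1, hb2, hb3⟩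
    -- find the unique composition with last entry 1
    have h2' : ∑ α ∈ b.support, b α * α 2 = 1 := by
      have := hb3 2
      rw [hν2, Finsupp.sum] at this
      exact_mod_cast this
    have hne : ∃ α ∈ b.support, b α * α 2 ≠ 0 := by
      by_contra hc
      push_neg at hc
      rw [Finset.sum_eq_zero hc] at h2'
      exact absurd h2' (by omega)
    obtain ⟨α₀, hα₀s, hα₀ne⟩ := hne
    have hsplit : b α₀ * α₀ 2 + ∑ α ∈ b.support.erase α₀, b α * α 2 = 1 :=
      (Finset.add_sum_erase _ (fun α => b α * α 2) hα₀s).trans h2'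
    have hkey : b α₀ * α₀ 2 = 1 ∧ ∑ α ∈ b.support.erase α₀, b α * α 2 = 0 := by
      clear * - hsplit hα₀ne
      revert hsplit
      generalize (∑ α ∈ b.support.erase α₀, b α * α 2) = s
      intro hsplit
      omega
    have hα₀1 : b α₀ * α₀ 2 = 1 := hkey.1
    have hrest : ∑ α ∈ b.support.erase α₀, b α * α 2 = 0 := hkey.2
    have hbα₀ : b α₀ = 1 := (mul_eq_one.mp hα₀1).1
    have hα₀2 : α₀ 2 = 1 := (mul_eq_one.mp hα₀1).2
    have hother : ∀ α ∈ b.support, α ≠ α₀ → α 2 = 0 := by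
      intro α hs hne'
      have h0 : b α * α 2 = 0 :=
        Finset.sum_eq_zero_iff.mp hrest α (Finset.mem_erase.2 ⟨hne', hs⟩)
      have hbne : b α ≠ 0 := Finsupp.mem_support_iff.mp hs
      rcases Nat.mul_eq_zero.mp h0 with h | h
      · exact absurd h hbne
      · exact h
    set r : ℕ := α₀ 1 with hrdef
    have hsum₀ : α₀ 0 + α₀ 1 + α₀ 2 = n := by
      have := hb1 α₀ hα₀s
      rwa [Fin.sum_univ_three] at this
    have hrn : r + 1 ≤ n := by clear * - hsum₀ hα₀2 hrdef; omega
    have hα₀eq : α₀ = c0 n r := by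
      funext i
      fin_cases i <;> simp only [Fin.zero_eta, Fin.mk_one, Fin.reduceFinMk]
      · rw [c0_zero]; clear * - hsum₀ hα₀2 hrdef; omega
      · rw [c0_one]
      · rw [c0_two]; exact hα₀2
    set b' : (Fin 3 → ℕ) →₀ ℕ := b.erase α₀ with hb'def
    have hb'eq : Finsupp.single α₀ 1 + b' = b := by
      conv_lhs => rw [← hbα₀]
      exact Finsupp.single_add_erase α₀ b
    have hb'supp : ∀ α ∈ b'.support, α = cJ n (α 1) ∧ α 1 ≤ n := by
      intro α h
      rw [hb'def, Finsupp.support_erase, Finset.mem_erase] at h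
      obtain ⟨hne', hs⟩ := h
      have h2α : α 2 = 0 := hother α hs hne'
      have hsnα : α 0 + α 1 + α 2 = n := by
        have := hb1 α hs; rwa [Fin.sum_univ_three] at this
      constructor
      · funext i
        fin_cases i <;> simp only [Fin.zero_eta, Fin.mk_one, Fin.reduceFinMk]
        · rw [cJ_zero]; clear * - h2α hsnα; omega
        · rw [cJ_one]
        · rw [cJ_two]; exact h2α
      · clear * - h2α hsnα; omega
    -- decompose all sums over b
    have hdecomp : ∀ {M : Type} [AddCommMonoid M] (f : (Fin 3 → ℕ) → ℕ → M)
        (h0 : ∀ a, f a 0 = 0) (hadd : ∀ a b₁ b₂, f a (b₁ + b₂) = f a b₁ + f a b₂),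
        b.sum f = f α₀ 1 + b'.sum f := by
      intro M _ f h0 hadd
      conv_lhs => rw [← hb'eq]
      rw [Finsupp.sum_add_index' h0 hadd, Finsupp.sum_single_index (h0 _)]
    have hb'card : b'.sum (fun _ c => c) = d - 1 := by
      have h' : d = 1 + b'.sum (fun _ c => c) := by
        rw [← hb2]; exact hdecomp (fun _ c => c) (fun _ => rfl) (fun _ _ _ => rfl)
      clear * - h'
      generalize hgen : b'.sum (fun _ c => c) = t at h' ⊢
      omega
    -- build the multiset of second coordinates
    set m : Multiset ℕ := b'.toMultiset.map (fun α => α 1) with hmdef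
    have hmcard : Multiset.card m = d - 1 := by
      rw [hmdef, Multiset.card_map, Finsupp.card_toMultiset]
      exact hb'card
    have hmmem : ∀ v ∈ m, v ≤ n := by
      intro v hv
      rw [hmdef, Multiset.mem_map] at hv
      obtain ⟨α, hα, rfl⟩ := hv
      rw [Finsupp.mem_toMultiset] at hα
      exact (hb'supp α hα).2
    have hmcount : ∀ v, Multiset.count v m = b' (cJ n v) := by
      intro v
      rw [hmdef, Multiset.count_map]
      have hfil : b'.toMultiset.filter (fun α => v = α 1)
          = b'.toMultiset.filter (fun α => cJ n v = α) := by
        apply Multiset.filter_congr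
        intro α hα
        rw [Finsupp.mem_toMultiset] at hα
        constructor
        · intro h; rw [(hb'supp α hα).1, ← h]
        · intro h; rw [← h, cJ_one]
      rw [hfil, ← Multiset.countP_eq_card_filter, ← Multiset.count, Finsupp.count_toMultiset]
    -- build the sorted tuple
    set l : List ℕ := m.toList with hldef
    have hlen : l.length = d - 1 := by rw [hldef, Multiset.length_toList]; exact hmcard
    set ντ : Fin (d - 1) → ℕ := fun i => l.get (Fin.cast hlen.symm i) with hντ
    have hofν : List.ofFn ντ = l := by
      apply List.ext_get
      · simp [hlen]
      · intro i h1 h2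
        simp [hντ, List.get_ofFn]
    set σ : Equiv.Perm (Fin (d - 1)) := Tuple.sort ντ with hσ
    set μ : Fin (d - 1) → ℕ := fun i => ντ (σ (Fin.rev i)) with hμdef
    have hμa : Antitone μ := by
      intro i j hij
      exact Tuple.monotone_sort ντ (Fin.rev_le_rev.mpr hij)
    have hperm : (List.ofFn μ).Perm l := by
      have : μ = ντ ∘ (Fin.revPerm.trans σ) := rfl
      rw [this, ← hofν]
      exact Equiv.Perm.ofFn_comp_perm _ ντ
    have hcount : ∀ v, (List.ofFn μ).count v = b' (cJ n v) := by
      intro v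
      rw [hperm.count_eq, ← Multiset.coe_count, hldef, Multiset.coe_toList]
      exact hmcount v
    have hμn : ∀ i, μ i ≤ n := by
      intro i
      apply hmmem
      have h1 : μ i ∈ List.ofFn μ := (List.mem_ofFn (f := μ) (a := μ i)).mpr ⟨i, rfl⟩
      have h2 : μ i ∈ l := hperm.mem_iff.mp h1
      exact Multiset.mem_toList.mp h2
    -- the key identity
    have hΦeq : Phi n r μ = b := by
      rw [Phi, hα₀eq.symm, ← hb'eq]
      congr 1
      ext α
      have hlhs : (∑ i, Finsupp.single (cJ n (μ i)) (1 : ℕ)) α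
          = ∑ i, if cJ n (μ i) = α then 1 else 0 := by
        rw [Finsupp.finset_sum_apply]
        simp [Finsupp.single_apply]
      rw [hlhs]
      by_cases hα : ∃ v, cJ n v = α
      · obtain ⟨v, rfl⟩ := hα
        have : ∀ i, (cJ n (μ i) = cJ n v) ↔ (μ i = v) := fun i => cJ_inj.eq_iff
        simp only [this]
        rw [← count_ofFn]
        exact hcount v
      · push_neg at hα
        rw [Finset.sum_eq_zero fun i _ => if_neg (hα (μ i))]
        by_contra hc
        have hαs : α ∈ b'.support := Finsupp.mem_support_iff.mpr fun h => hc h.symm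
        exact hα (α 1) ((hb'supp α hαs).1).symm
    -- the remaining side condition
    have hμs : ∑ i, (μ i : ℤ) = (k : ℤ) - (r : ℤ) := by
      have h1 := hb3 1
      rw [hν1, ← hΦeq] at h1
      rw [Phi_sum n r μ _ (fun a => by simp) (fun a b₁ b₂ => by push_cast; ring)] at h1
      simp only [c0_one, cJ_one, Nat.cast_one, one_mul] at h1
      linarith [h1]
    exact ⟨⟨⟨r, hrn⟩, ⟨μ, hμa, hμn, hμs⟩⟩, Subtype.ext hΦeq⟩
  -- assemble the cardinalities
  have e : ((r : Fin n) × P r) ≃ S := Equiv.ofBijective Φ ⟨hinj, hsurj⟩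
  have hfin : ∀ r : Fin n, Finite (P r) := by
    intro r
    apply Finite.of_injective (fun μ : P r => fun i => (⟨μ.1 i, Nat.lt_succ_of_le (μ.2.2.1 i)⟩ : Fin (n + 1)))
    rintro ⟨μ, hμ⟩ ⟨μ', hμ'⟩ h
    ext i
    exact congrArg Fin.val (congrFun h i)
  letI : ∀ r : Fin n, Fintype (P r) := fun r => @Fintype.ofFinite _ (hfin r)
  have hcards : cCoeff d n ν = Nat.card ((r : Fin n) × P r) := (Nat.card_congr e).symm
  rw [hν] at hcards
  rw [hcards, Nat.card_eq_fintype_card, Fintype.card_sigma]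
  rw [← Fin.sum_univ_eq_sum_range (fun r => pBox (d - 1) n ((k : ℤ) - (r : ℤ)))]
  apply Finset.sum_congr rfl
  intro r _
  rw [pBox, Nat.card_eq_fintype_card]
end

section
/- Let (μ₂,μ₃) be one of the pairs (3,3), (3,1), (2,1), (1,1), (1,0), and let d ≥ 1 and n ≥ 1 be integers such that dn − μ₂ − μ₃ ≥ μ₂ (so that λ := (dn−μ₂−μ₃, μ₂, μ₃) is a partition of dn). Then the plethysm coefficient a_λ(d[n]) equals 0. -/
namespace PlethAux


/-- DP counting function. -/
def count : List (ℕ × ℕ) → ℕ → ℕ → ℕ → ℕ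
  | [], s, t, _ => if s = 0 ∧ t = 0 then 1 else 0
  | p :: ps, s, t, d =>
      ∑ j ∈ Finset.range (d + 1),
        if j * p.1 ≤ s ∧ j * p.2 ≤ t then count ps (s - j * p.1) (t - j * p.2) (d - j) else 0

/-- Solutions: multisets of parts from `l` with bounded size and prescribed coordinate sums. -/
def Sol (l : List (ℕ × ℕ)) (s t d : ℕ) : Type :=
  {m : Multiset (ℕ × ℕ) // (∀ x ∈ m, x ∈ l) ∧ m.card ≤ d ∧
    (m.map Prod.fst).sum = s ∧ (m.map Prod.snd).sum = t}

theorem filter_ne_add_replicate (m : Multiset (ℕ × ℕ)) (p : ℕ × ℕ) :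
    m.filter (· ≠ p) + Multiset.replicate (m.count p) p = m := by
  have h5 := Multiset.filter_add_not (· ≠ p) m
  have h6 : m.filter (fun a => ¬ a ≠ p) = Multiset.replicate (m.count p) p := by
    simp only [ne_eq, not_not]
    exact Multiset.filter_eq' m p
  rwa [h6] at h5

theorem dp (l : List (ℕ × ℕ)) (hl : l.Nodup) :
    ∀ s t d : ℕ, Nonempty (Sol l s t d ≃ Fin (count l s t d)) := by
  induction l with
  | nil =>
    intro s t d
    by_cases hst : s = 0 ∧ t = 0
    · have hc : count [] s t d = 1 := by simp [count, hst]
      rw [hc]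
      refine ⟨⟨fun _ => 0, fun _ => ⟨0, by simp [hst.1, hst.2]⟩, ?_, ?_⟩⟩
      · rintro ⟨m, h1, h2, h3, h4⟩
        have : m = 0 := Multiset.eq_zero_of_forall_notMem fun x hx => by simpa using h1 x hx
        apply Subtype.ext
        simp [this]
      · intro j
        exact Subsingleton.elim _ _
    · have : IsEmpty (Sol [] s t d) := by
        constructor
        rintro ⟨m, h1, h2, h3, h4⟩
        have hm : m = 0 := Multiset.eq_zero_of_forall_notMem fun x hx => by simpa using h1 x hx
        subst hm
        simp at h3 h4
        exact hst ⟨h3.symm, h4.symm⟩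
      have hc : count [] s t d = 0 := by simp [count, hst]
      rw [hc]
      exact ⟨Equiv.equivOfIsEmpty _ _⟩
  | cons p ps ih =>
    have hp : p ∉ ps := by simp [List.nodup_cons] at hl; exact hl.1
    have hps : ps.Nodup := by simp [List.nodup_cons] at hl; exact hl.2
    intro s t d
    set P : Fin (d + 1) → Multiset (ℕ × ℕ) → Prop := fun j m =>
      (∀ x ∈ m, x ∈ ps) ∧ m.card + (j : ℕ) ≤ d ∧
        (m.map Prod.fst).sum + (j : ℕ) * p.1 = s ∧
        (m.map Prod.snd).sum + (j : ℕ) * p.2 = t with hP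
    have e1 : Sol (p :: ps) s t d ≃ {x : Fin (d + 1) × Multiset (ℕ × ℕ) // P x.1 x.2} := by
      refine ⟨fun x => ⟨(⟨x.1.count p, ?_⟩, x.1.filter (· ≠ p)), ?_⟩,
              fun x => ⟨x.1.2 + Multiset.replicate ((x.1.1 : ℕ)) p, ?_⟩, ?_, ?_⟩
      · have := (Multiset.count_le_card p x.1).trans x.2.2.1
        omega
      · obtain ⟨m, h1, h2, h3, h4⟩ := x
        have key := filter_ne_add_replicate m p
        have hcard : (m.filter (· ≠ p)).card + m.count p = m.card := by
          conv_rhs => rw [← key]; simp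
        have hs : ((m.filter (· ≠ p)).map Prod.fst).sum + m.count p * p.1
            = (m.map Prod.fst).sum := by
          conv_rhs => rw [← key]
          simp [Multiset.sum_replicate, mul_comm]
        have ht : ((m.filter (· ≠ p)).map Prod.snd).sum + m.count p * p.2
            = (m.map Prod.snd).sum := by
          conv_rhs => rw [← key]
          simp [Multiset.sum_replicate, mul_comm]
        refine ⟨?_, by
          show (m.filter (· ≠ p)).card + m.count p ≤ d
          omega, by simp only [hs, h3], by simp only [ht, h4]⟩
        · intro x hx
          rw [Multiset.mem_filter] at hx
          have := h1 x hx.1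
          simp at this
          rcases this with h | h
          · exact absurd h hx.2
          · exact h
      · obtain ⟨⟨j, m⟩, h1, h2, h3, h4⟩ := x
        dsimp only at h1 h2 h3 h4
        refine ⟨?_, ?_, ?_, ?_⟩
        · intro x hx
          rw [Multiset.mem_add] at hx
          rcases hx with hx | hx
          · exact List.mem_cons_of_mem _ (h1 x hx)
          · rw [Multiset.eq_of_mem_replicate hx]; exact List.mem_cons_self
        · dsimp only
          rw [Multiset.card_add, Multiset.card_replicate]
          have : (j : ℕ) ≤ d := by omega
          omega
        · simpa [Multiset.sum_replicate, mul_comm] using h3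
        · simpa [Multiset.sum_replicate, mul_comm] using h4
      · rintro ⟨m, h1, h2, h3, h4⟩
        exact Subtype.ext (filter_ne_add_replicate m p)
      · rintro ⟨⟨j, m⟩, h1, h2, h3, h4⟩
        have hcm : m.count p = 0 := by
          rw [Multiset.count_eq_zero]
          intro hmem
          exact hp (h1 p hmem)
        have hmf : m.filter (· ≠ p) = m :=
          Multiset.filter_eq_self.2 fun x hx => by
            intro hxp; subst hxp; exact hp (h1 x hx)
        apply Subtype.ext
        apply Prod.ext
        · apply Fin.ext
          simp [Multiset.count_add, hcm, Multiset.count_replicate_self]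
        · simp only []
          rw [Multiset.filter_add, hmf]
          have : (Multiset.replicate (j : ℕ) p).filter (· ≠ p) = 0 := by
            rw [Multiset.filter_eq_nil]
            intro a ha
            simp [Multiset.eq_of_mem_replicate ha]
          rw [this, add_zero]
    have e2 := Equiv.subtypeProdEquivSigmaSubtype P
    let c : Fin (d + 1) → ℕ := fun j =>
      if (j : ℕ) * p.1 ≤ s ∧ (j : ℕ) * p.2 ≤ t then
        count ps (s - (j : ℕ) * p.1) (t - (j : ℕ) * p.2) (d - (j : ℕ)) else 0
    have e3 : ∀ j : Fin (d + 1), Nonempty ({m : Multiset (ℕ × ℕ) // P j m} ≃ Fin (c j)) := by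
      intro j
      by_cases hg : (j : ℕ) * p.1 ≤ s ∧ (j : ℕ) * p.2 ≤ t
      · have hcj : c j = count ps (s - (j : ℕ) * p.1) (t - (j : ℕ) * p.2) (d - (j : ℕ)) :=
          if_pos hg
        rw [hcj]
        have hj : (j : ℕ) ≤ d := by omega
        have eq1 : {m : Multiset (ℕ × ℕ) // P j m}
            ≃ Sol ps (s - (j : ℕ) * p.1) (t - (j : ℕ) * p.2) (d - (j : ℕ)) := by
          apply Equiv.subtypeEquivRight
          intro m
          rw [hP]
          constructor
          · rintro ⟨a1, a2, a3, a4⟩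
            exact ⟨a1, by omega, by omega, by omega⟩
          · rintro ⟨a1, a2, a3, a4⟩
            exact ⟨a1, by omega, by omega, by omega⟩
        obtain ⟨eq2⟩ := ih hps (s - (j : ℕ) * p.1) (t - (j : ℕ) * p.2) (d - (j : ℕ))
        exact ⟨eq1.trans eq2⟩
      · have hcj : c j = 0 := if_neg hg
        rw [hcj]
        have : IsEmpty {m : Multiset (ℕ × ℕ) // P j m} := by
          constructor
          rintro ⟨m, a1, a2, a3, a4⟩
          exact hg ⟨by omega, by omega⟩
        exact ⟨Equiv.equivOfIsEmpty _ _⟩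
    have e3' : ∀ j : Fin (d + 1), {m : Multiset (ℕ × ℕ) // P j m} ≃ Fin (c j) :=
      fun j => (e3 j).some
    have e4 : Sol (p :: ps) s t d ≃ Σ j : Fin (d + 1), Fin (c j) :=
      (e1.trans e2).trans (Equiv.sigmaCongrRight e3')
    have hcount : count (p :: ps) s t d = ∑ j : Fin (d + 1), c j := by
      rw [count, ← Fin.sum_univ_eq_sum_range]
    obtain ⟨e5⟩ : Nonempty ((Σ j : Fin (d + 1), Fin (c j)) ≃ Fin (count (p :: ps) s t d)) := by
      refine ⟨Fintype.equivFinOfCardEq ?_⟩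
      rw [Fintype.card_sigma]
      simp only [Fintype.card_fin]
      exact hcount.symm
    exact ⟨e4.trans e5⟩



theorem sum_map_add' (m : Multiset (ℕ × ℕ)) :
    (m.map fun x => x.1 + x.2).sum = (m.map Prod.fst).sum + (m.map Prod.snd).sum := by
  induction m using Multiset.induction_on with
  | empty => simp
  | cons a m ih => simp only [Multiset.map_cons, Multiset.sum_cons, ih]; ring

theorem card_le_weight (m : Multiset (ℕ × ℕ)) (h : ∀ x ∈ m, 1 ≤ x.1 + x.2) :
    m.card ≤ (m.map fun x => x.1 + x.2).sum := by
  induction m using Multiset.induction_on with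
  | empty => simp
  | cons a m ih =>
    simp only [Multiset.map_cons, Multiset.sum_cons, Multiset.card_cons]
    have h1 := h a (Multiset.mem_cons_self a m)
    have h2 := ih fun x hx => h x (Multiset.mem_cons_of_mem hx)
    omega

theorem fst_le_sum (m : Multiset (ℕ × ℕ)) (x : ℕ × ℕ) (hx : x ∈ m) :
    x.1 ≤ (m.map Prod.fst).sum :=
  Multiset.single_le_sum (fun y _ => Nat.zero_le y) _ (Multiset.mem_map_of_mem _ hx)

theorem snd_le_sum (m : Multiset (ℕ × ℕ)) (x : ℕ × ℕ) (hx : x ∈ m) :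
    x.2 ≤ (m.map Prod.snd).sum :=
  Multiset.single_le_sum (fun y _ => Nat.zero_le y) _ (Multiset.mem_map_of_mem _ hx)

def partsList (s t N : ℕ) : List (ℕ × ℕ) :=
  ((List.range (s + 1)).flatMap fun a => (List.range (t + 1)).map fun b => (a, b)).filter
    fun x => 1 ≤ x.1 + x.2 ∧ x.1 + x.2 ≤ N

theorem mem_partsList {s t N : ℕ} {x : ℕ × ℕ} :
    x ∈ partsList s t N ↔ x.1 ≤ s ∧ x.2 ≤ t ∧ 1 ≤ x.1 + x.2 ∧ x.1 + x.2 ≤ N := by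
  simp only [partsList, List.mem_filter, List.mem_flatMap, List.mem_map, List.mem_range,
    decide_eq_true_eq]
  constructor
  · rintro ⟨⟨a, ha, b, hb, rfl⟩, h2⟩
    exact ⟨by omega, by omega, h2.1, h2.2⟩
  · rintro ⟨h1, h2, h3, h4⟩
    exact ⟨⟨x.1, by omega, x.2, by omega, rfl⟩, h3, h4⟩

theorem partsList_nodup (s t N : ℕ) : (partsList s t N).Nodup := by
  apply List.Nodup.filter
  rw [List.nodup_flatMap]
  constructor
  · intro a _
    refine (List.nodup_range (n := t + 1)).map ?_
    intro b1 b2 h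
    exact (Prod.mk.injEq a b1 a b2 ▸ h : a = a ∧ b1 = b2).2
  · apply List.Pairwise.imp ?_ (List.pairwise_lt_range (n := s + 1))
    intro a b hab
    simp only [Function.onFun, List.disjoint_left]
    rintro ⟨u, v⟩ hu hv
    simp only [List.mem_map] at hu hv
    obtain ⟨b1, _, hb1⟩ := hu
    obtain ⟨b2, _, hb2⟩ := hv
    have e1 : a = u ∧ b1 = v := Prod.mk.injEq a b1 u v ▸ hb1
    have e2 : b = u ∧ b2 = v := Prod.mk.injEq b b2 u v ▸ hb2
    omega




/-- Multiset version of the solution set for `cCoeff`. -/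
def SolM (d n : ℕ) (ν : Fin 3 → ℤ) : Type :=
  {M : Multiset (Fin 3 → ℕ) // (∀ α ∈ M, ∑ i, α i = n) ∧ M.card = d ∧
    ∀ i : Fin 3, (M.map fun α => ((α i : ℕ) : ℤ)).sum = ν i}

theorem toMultiset_map_sum {α M : Type*} [DecidableEq α] [AddCommMonoid M] (f : α →₀ ℕ)
    (g : α → M) :
    ((Finsupp.toMultiset f).map g).sum = f.sum fun a c => c • g a := by
  induction f using Finsupp.induction with
  | zero => simp
  | single_add a c f haf hc ih =>
    rw [Finsupp.toMultiset_add, Multiset.map_add, Multiset.sum_add, ih,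
      Finsupp.toMultiset_single,
      Finsupp.sum_add_index' (fun a => zero_smul ℕ (g a)) (fun a c1 c2 => add_smul c1 c2 (g a)),
      Finsupp.sum_single_index (zero_smul ℕ (g a)),
      Multiset.map_nsmul, Multiset.map_singleton, Multiset.sum_nsmul, Multiset.sum_singleton]

theorem cCoeff_eq_solM (d n : ℕ) (ν : Fin 3 → ℤ) : cCoeff d n ν = Nat.card (SolM d n ν) := by
  apply Nat.card_congr
  refine ⟨fun b => ⟨Finsupp.toMultiset b.1, ?_, ?_, ?_⟩,
          fun M => ⟨Multiset.toFinsupp M.1, ?_, ?_, ?_⟩, ?_, ?_⟩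
  · intro α hα
    exact b.2.1 α ((Finsupp.mem_toMultiset _ _).1 hα)
  · rw [Finsupp.card_toMultiset]; exact b.2.2.1
  · intro i
    rw [toMultiset_map_sum]
    simpa [nsmul_eq_mul] using b.2.2.2 i
  · intro α hα
    apply M.2.1 α
    rw [Multiset.toFinsupp_support] at hα
    exact Multiset.mem_toFinset.1 hα
  · have hc := Finsupp.card_toMultiset (Multiset.toFinsupp M.1)
    rw [Multiset.toFinsupp_toMultiset] at hc
    exact hc.symm.trans M.2.2.1
  · intro i
    have := M.2.2.2 i
    rw [← Multiset.toFinsupp_toMultiset M.1, toMultiset_map_sum] at this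
    simpa [nsmul_eq_mul] using this
  · intro b; apply Subtype.ext; simp
  · intro M; apply Subtype.ext; simp

/-- Pair version of the solution set. -/
def SolP (s t d n : ℕ) : Type :=
  {m : Multiset (ℕ × ℕ) // (∀ x ∈ m, 1 ≤ x.1 + x.2 ∧ x.1 + x.2 ≤ n) ∧ m.card ≤ d ∧
    (m.map Prod.fst).sum = s ∧ (m.map Prod.snd).sum = t}

theorem sum_sub_part (n : ℕ) (m : Multiset (ℕ × ℕ)) (hm : ∀ x ∈ m, x.1 + x.2 ≤ n) :
    (m.map fun x => ((n - x.1 - x.2 : ℕ) : ℤ)).sum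
      = m.card * n - (m.map fun x => (x.1 : ℤ)).sum - (m.map fun x => (x.2 : ℤ)).sum := by
  induction m using Multiset.induction_on with
  | empty => simp
  | cons a m ih =>
    have ha : a.1 + a.2 ≤ n := hm a (Multiset.mem_cons_self a m)
    have h1 : ((n - a.1 - a.2 : ℕ) : ℤ) = (n : ℤ) - a.1 - a.2 := by omega
    rw [Multiset.map_cons, Multiset.sum_cons, ih (fun x hx => hm x (Multiset.mem_cons_of_mem hx)),
      Multiset.map_cons, Multiset.sum_cons, Multiset.map_cons, Multiset.sum_cons,
      Multiset.card_cons, h1]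
    push_cast
    ring

theorem natCast_msum {α : Type*} (m : Multiset α) (f : α → ℕ) :
    (((m.map f).sum : ℕ) : ℤ) = (m.map fun x => (f x : ℤ)).sum := by
  rw [Nat.cast_multiset_sum, Multiset.map_map]
  rfl

/-- The key bijection between compositions-multisets and pair-multisets. -/
theorem solM_equiv_solP (d n s t : ℕ) (hst : s + t ≤ d * n)
    (ν : Fin 3 → ℤ) (h0 : ν 0 = (d * n : ℤ) - s - t) (h1 : ν 1 = (s : ℤ)) (h2 : ν 2 = (t : ℤ)) :
    Nonempty (SolM d n ν ≃ SolP s t d n) := by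
  classical
  set gg : ℕ × ℕ → (Fin 3 → ℕ) := fun x => ![n - x.1 - x.2, x.1, x.2] with hgg
  set ee : Fin 3 → ℕ := ![n, 0, 0] with hee
  have hgg0 : ∀ x : ℕ × ℕ, gg x 0 = n - x.1 - x.2 := fun x => rfl
  have hgg1 : ∀ x : ℕ × ℕ, gg x 1 = x.1 := fun x => rfl
  have hgg2 : ∀ x : ℕ × ℕ, gg x 2 = x.2 := fun x => rfl
  set p : (Fin 3 → ℕ) → Prop := fun α => ¬ (α 1 + α 2 = 0) with hp
  have hsum_gg : ∀ x : ℕ × ℕ, x.1 + x.2 ≤ n → ∑ i, gg x i = n := by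
    intro x hx
    rw [Fin.sum_univ_three, hgg0, hgg1, hgg2]
    omega
  have hsum_ee : ∑ i, ee i = n := by
    rw [Fin.sum_univ_three, hee]
    simp
  have hpgg : ∀ x : ℕ × ℕ, 1 ≤ x.1 + x.2 → p (gg x) := by
    intro x hx
    rw [hp, hgg]
    simp only [Matrix.cons_val_one, Matrix.head_cons]
    show ¬ (x.1 + x.2 = 0)
    omega
  have hpee : ¬ p ee := by
    rw [hp, hee]
    simp
  have hee0 : ee 0 = n := rfl
  have hee1 : ee 1 = 0 := rfl
  have hee2 : ee 2 = 0 := rfl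
  clear_value gg ee p
  refine ⟨⟨fun M => ⟨(M.1.filter p).map fun α => (α 1, α 2), ?_⟩,
          fun m => ⟨m.1.map gg + Multiset.replicate (d - m.1.card) ee, ?_⟩, ?_, ?_⟩⟩
  · obtain ⟨M, hall, hcard, hν⟩ := M
    -- ℕ-sums
    have hs1 : (M.map fun α => α 1).sum = s := by
      have := hν 1
      rw [h1, ← natCast_msum] at this
      exact_mod_cast this
    have hs2 : (M.map fun α => α 2).sum = t := by
      have := hν 2
      rw [h2, ← natCast_msum] at this
      exact_mod_cast this
    have hsplit1 : ((M.filter p).map fun α => α 1).sum + ((M.filter fun α => ¬ p α).map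
        fun α => α 1).sum = s := by
      rw [← Multiset.sum_add, ← Multiset.map_add, Multiset.filter_add_not p M, hs1]
    have hsplit2 : ((M.filter p).map fun α => α 2).sum + ((M.filter fun α => ¬ p α).map
        fun α => α 2).sum = t := by
      rw [← Multiset.sum_add, ← Multiset.map_add, Multiset.filter_add_not p M, hs2]
    have hz1 : ((M.filter fun α => ¬ p α).map fun α => α 1).sum = 0 := by
      apply Multiset.sum_eq_zero
      intro y hy
      obtain ⟨α, hα, rfl⟩ := Multiset.mem_map.1 hy
      have := (Multiset.mem_filter.1 hα).2
      simp only [hp, not_not] at this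
      exact Nat.eq_zero_of_add_eq_zero_right this
    have hz2 : ((M.filter fun α => ¬ p α).map fun α => α 2).sum = 0 := by
      apply Multiset.sum_eq_zero
      intro y hy
      obtain ⟨α, hα, rfl⟩ := Multiset.mem_map.1 hy
      have := (Multiset.mem_filter.1 hα).2
      simp only [hp, not_not] at this
      exact Nat.eq_zero_of_add_eq_zero_left this
    refine ⟨?_, ?_, ?_, ?_⟩
    · intro x hx
      obtain ⟨α, hα, rfl⟩ := Multiset.mem_map.1 hx
      rw [Multiset.mem_filter] at hα
      have hsum := hall α hα.1
      rw [Fin.sum_univ_three] at hsum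
      have := hα.2
      simp only [hp] at this
      refine ⟨Nat.pos_of_ne_zero this, Nat.le.intro (k := α 0) ?_⟩
      rw [← hsum]
      ring
    · rw [Multiset.card_map]
      calc (M.filter p).card ≤ M.card := Multiset.card_le_card (Multiset.filter_le _ _)
        _ = d := hcard
    · rw [Multiset.map_map]
      show ((M.filter p).map fun α => α 1).sum = s
      rw [hz1, add_zero] at hsplit1
      exact hsplit1
    · rw [Multiset.map_map]
      show ((M.filter p).map fun α => α 2).sum = t
      rw [hz2, add_zero] at hsplit2
      exact hsplit2
  · -- invFun conditions
    obtain ⟨m, hmem, hcard, hs, ht⟩ := m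
    have hS1 : (m.map fun x => ((x.1 : ℕ) : ℤ)).sum = (s : ℤ) := by
      rw [← natCast_msum m Prod.fst]
      exact_mod_cast congrArg (Nat.cast : ℕ → ℤ) hs
    have hS2 : (m.map fun x => ((x.2 : ℕ) : ℤ)).sum = (t : ℤ) := by
      rw [← natCast_msum m Prod.snd]
      exact_mod_cast congrArg (Nat.cast : ℕ → ℤ) ht
    dsimp only
    refine ⟨?_, ?_, ?_⟩
    · intro α hα
      rw [Multiset.mem_add] at hα
      rcases hα with hα | hα
      · obtain ⟨x, hx, rfl⟩ := Multiset.mem_map.1 hα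
        exact hsum_gg x (hmem x hx).2
      · rw [Multiset.eq_of_mem_replicate hα]
        exact hsum_ee
    · rw [Multiset.card_add, Multiset.card_map, Multiset.card_replicate]
      omega
    · intro i
      rw [Multiset.map_add, Multiset.sum_add, Multiset.map_map, Multiset.map_replicate,
        Multiset.sum_replicate]
      fin_cases i
      · show (m.map fun x => ((gg x 0 : ℕ) : ℤ)).sum + (d - m.card) • ((ee 0 : ℕ) : ℤ) = ν 0
        simp only [hgg0, hee0]
        rw [sum_sub_part n m (fun x hx => (hmem x hx).2), hS1, hS2, h0, nsmul_eq_mul]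
        push_cast [Nat.cast_sub hcard]
        ring
      · show (m.map fun x => ((gg x 1 : ℕ) : ℤ)).sum + (d - m.card) • ((ee 1 : ℕ) : ℤ) = ν 1
        simp only [hgg1, hee1, Nat.cast_zero, smul_zero, add_zero, h1, Multiset.card_map]
        exact hS1
      · show (m.map fun x => ((gg x 2 : ℕ) : ℤ)).sum + (d - m.card) • ((ee 2 : ℕ) : ℤ) = ν 2
        simp only [hgg2, hee2, Nat.cast_zero, smul_zero, add_zero, h2, Multiset.card_map]
        exact hS2
  · -- left inverse
    rintro ⟨M, hall, hcard, hν⟩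
    apply Subtype.ext
    show ((M.filter p).map (fun α => (α 1, α 2))).map gg
        + Multiset.replicate (d - (((M.filter p).map fun α => (α 1, α 2))).card) ee = M
    have hFG : (M.filter p).card + (M.filter fun α => ¬ p α).card = M.card := by
      rw [← Multiset.card_add, Multiset.filter_add_not]
    have hF : ((M.filter p).map (fun α => (α 1, α 2))).map gg = M.filter p := by
      rw [Multiset.map_map]
      have : ∀ α ∈ M.filter p, (gg ∘ fun α => (α 1, α 2)) α = id α := by
        intro α hα
        have hsum := hall α (Multiset.mem_of_mem_filter hα)
        rw [Fin.sum_univ_three] at hsum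
        funext i
        fin_cases i
        · show gg (α 1, α 2) 0 = α 0
          rw [hgg0]
          show n - α 1 - α 2 = α 0
          clear hν hall
          omega
        · show gg (α 1, α 2) 1 = α 1
          rw [hgg1]
        · show gg (α 1, α 2) 2 = α 2
          rw [hgg2]
      rw [Multiset.map_congr rfl this, Multiset.map_id]
    have hG : Multiset.replicate (d - (((M.filter p).map fun α => (α 1, α 2))).card) ee
        = M.filter fun α => ¬ p α := by
      rw [Multiset.card_map]
      symm
      rw [Multiset.eq_replicate]
      constructor
      · clear hν hall
        omega
      · intro b hb
        have hbM := Multiset.mem_of_mem_filter hb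
        have hb2 := (Multiset.mem_filter.1 hb).2
        rw [hp] at hb2
        simp only [not_not] at hb2
        have hsum := hall b hbM
        rw [Fin.sum_univ_three] at hsum
        funext i
        fin_cases i
        · show b 0 = ee 0
          rw [hee0]
          clear hν hall
          omega
        · show b 1 = ee 1
          rw [hee1]
          clear hν hall
          omega
        · show b 2 = ee 2
          rw [hee2]
          clear hν hall
          omega
    rw [hF, hG, Multiset.filter_add_not]
  · -- right inverse
    rintro ⟨m, hmem, hcard, hs, ht⟩
    apply Subtype.ext
    show (((m.map gg + Multiset.replicate (d - m.card) ee).filter p).map fun α => (α 1, α 2)) = m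
    rw [Multiset.filter_add, Multiset.filter_map]
    have h1' : m.filter (p ∘ gg) = m :=
      Multiset.filter_eq_self.2 fun x hx => hpgg x (hmem x hx).1
    have h2' : (Multiset.replicate (d - m.card) ee).filter p = 0 :=
      Multiset.filter_eq_nil.2 fun a ha => Multiset.eq_of_mem_replicate ha ▸ hpee
    rw [h1', h2', add_zero, Multiset.map_map]
    have : ∀ x ∈ m, ((fun α => (α 1, α 2)) ∘ gg) x = id x := by
      intro x hx
      show (gg x 1, gg x 2) = x
      rw [hgg1, hgg2]
    rw [Multiset.map_congr rfl this, Multiset.map_id]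


end PlethAux

namespace PlethAux

/-- The master counting value. -/
def Mval (s t d n : ℕ) : ℕ :=
  count (partsList s t (min n (s + t))) s t (min d (s + t))

theorem solP_card (s t d n : ℕ) : Nat.card (SolP s t d n) = Mval s t d n := by
  have equiv1 : SolP s t d n ≃ Sol (partsList s t (min n (s + t))) s t (min d (s + t)) := by
    apply Equiv.subtypeEquivRight
    intro m
    constructor
    · rintro ⟨h1, h2, h3, h4⟩
      have hb1 : ∀ x ∈ m, x.1 ≤ s := fun x hx => h3 ▸ fst_le_sum m x hx
      have hb2 : ∀ x ∈ m, x.2 ≤ t := fun x hx => h4 ▸ snd_le_sum m x hx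
      have hcK : m.card ≤ s + t := by
        refine (card_le_weight m fun x hx => (h1 x hx).1).trans ?_
        rw [sum_map_add', h3, h4]
      refine ⟨fun x hx => mem_partsList.2 ⟨hb1 x hx, hb2 x hx, (h1 x hx).1,
        le_min (h1 x hx).2 ?_⟩, le_min h2 hcK, h3, h4⟩
      have := hb1 x hx
      have := hb2 x hx
      omega
    · rintro ⟨h1, h2, h3, h4⟩
      refine ⟨fun x hx => ⟨(mem_partsList.1 (h1 x hx)).2.2.1,
        le_trans (mem_partsList.1 (h1 x hx)).2.2.2 (min_le_left _ _)⟩,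
        le_trans h2 (min_le_left _ _), h3, h4⟩
  rw [Nat.card_congr equiv1,
    Nat.card_eq_of_equiv_fin (dp _ (partsList_nodup s t _) s t _).some]
  rfl

theorem cCoeff_eval (d n s t : ℕ) (hst : s + t ≤ d * n) (ν : Fin 3 → ℤ)
    (h0 : ν 0 = (d * n : ℤ) - s - t) (h1 : ν 1 = (s : ℤ)) (h2 : ν 2 = (t : ℤ)) :
    cCoeff d n ν = Mval s t d n := by
  rw [cCoeff_eq_solM, Nat.card_congr (solM_equiv_solP d n s t hst ν h0 h1 h2).some, solP_card]

theorem cCoeff_zero (d n : ℕ) (ν : Fin 3 → ℤ) (i : Fin 3) (hi : ν i < 0) :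
    cCoeff d n ν = 0 := by
  rw [cCoeff]
  have : IsEmpty {b : (Fin 3 → ℕ) →₀ ℕ //
      (∀ α ∈ b.support, ∑ i, α i = n) ∧
      b.sum (fun _ c => c) = d ∧
      ∀ i : Fin 3, b.sum (fun α c => (c : ℤ) * (α i : ℤ)) = ν i} := by
    constructor
    rintro ⟨b, h1, h2, h3⟩
    have hnn : 0 ≤ b.sum (fun α c => (c : ℤ) * (α i : ℤ)) :=
      Finset.sum_nonneg fun a _ => by positivity
    rw [h3 i] at hnn
    omega
  exact Nat.card_of_isEmpty

end PlethAux


namespace PlethAux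

theorem Mval_min (s t d n : ℕ) (hK : s + t ≤ 6) :
    Mval s t d n = Mval s t (min d 6) (min n 6) := by
  rw [Mval, Mval, show min (min d 6) (s + t) = min d (s + t) from by omega,
    show min (min n 6) (s + t) = min n (s + t) from by omega]

theorem aCoeff_expand (lam : Fin 3 → ℕ) (d n : ℕ) :
    aCoeff lam d n =
      (cCoeff d n (fun i => (lam i : ℤ) - (i : ℕ) + (((1 : Equiv.Perm (Fin 3)) i : ℕ) : ℤ)) : ℤ)
      - cCoeff d n (fun i => (lam i : ℤ) - (i : ℕ) + (((Equiv.swap 0 1 : Equiv.Perm (Fin 3)) i : ℕ) : ℤ))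
      - cCoeff d n (fun i => (lam i : ℤ) - (i : ℕ) + (((Equiv.swap 0 2 : Equiv.Perm (Fin 3)) i : ℕ) : ℤ))
      - cCoeff d n (fun i => (lam i : ℤ) - (i : ℕ) + (((Equiv.swap 1 2 : Equiv.Perm (Fin 3)) i : ℕ) : ℤ))
      + cCoeff d n (fun i => (lam i : ℤ) - (i : ℕ) + (((Equiv.swap 0 1 * Equiv.swap 1 2 : Equiv.Perm (Fin 3)) i : ℕ) : ℤ))
      + cCoeff d n (fun i => (lam i : ℤ) - (i : ℕ) + (((Equiv.swap 1 2 * Equiv.swap 0 1 : Equiv.Perm (Fin 3)) i : ℕ) : ℤ)) := by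
  rw [aCoeff]
  rw [show (Finset.univ : Finset (Equiv.Perm (Fin 3))) =
      {1, Equiv.swap 0 1, Equiv.swap 0 2, Equiv.swap 1 2,
       Equiv.swap 0 1 * Equiv.swap 1 2, Equiv.swap 1 2 * Equiv.swap 0 1} from by decide]
  rw [Finset.sum_insert (by decide), Finset.sum_insert (by decide),
    Finset.sum_insert (by decide), Finset.sum_insert (by decide),
    Finset.sum_insert (by decide), Finset.sum_singleton]
  rw [show ((Equiv.Perm.sign (1 : Equiv.Perm (Fin 3)) : ℤ)) = 1 from by decide,
    show ((Equiv.Perm.sign (Equiv.swap 0 1 : Equiv.Perm (Fin 3)) : ℤ)) = -1 from by decide,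
    show ((Equiv.Perm.sign (Equiv.swap 0 2 : Equiv.Perm (Fin 3)) : ℤ)) = -1 from by decide,
    show ((Equiv.Perm.sign (Equiv.swap 1 2 : Equiv.Perm (Fin 3)) : ℤ)) = -1 from by decide,
    show ((Equiv.Perm.sign (Equiv.swap 0 1 * Equiv.swap 1 2 : Equiv.Perm (Fin 3)) : ℤ)) = 1 from by decide,
    show ((Equiv.Perm.sign (Equiv.swap 1 2 * Equiv.swap 0 1 : Equiv.Perm (Fin 3)) : ℤ)) = 1 from by decide]
  ring

theorem cCoeff_term (d n A B C s t : ℕ) (π : Equiv.Perm (Fin 3)) (p0 p1 p2 : ℕ)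
    (hp0 : ((π 0 : Fin 3) : ℕ) = p0) (hp1 : ((π 1 : Fin 3) : ℕ) = p1)
    (hp2 : ((π 2 : Fin 3) : ℕ) = p2)
    (hst : s + t ≤ d * n)
    (hA : (A : ℤ) + (p0 : ℤ) = (d * n : ℤ) - s - t)
    (hB : (B : ℤ) - 1 + (p1 : ℤ) = s) (hC : (C : ℤ) - 2 + (p2 : ℤ) = t) :
    cCoeff d n (fun i => ((![A, B, C] : Fin 3 → ℕ) i : ℤ) - (i : ℕ) + ((π i : ℕ) : ℤ))
      = Mval s t d n := by
  apply cCoeff_eval d n s t hst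
  · show (A : ℤ) - ((0 : ℕ) : ℤ) + (((π 0 : Fin 3) : ℕ) : ℤ) = (d * n : ℤ) - s - t
    rw [hp0]
    push_cast
    linarith [hA]
  · show (B : ℤ) - ((1 : ℕ) : ℤ) + (((π 1 : Fin 3) : ℕ) : ℤ) = (s : ℤ)
    rw [hp1]
    push_cast
    linarith [hB]
  · show (C : ℤ) - ((2 : ℕ) : ℤ) + (((π 2 : Fin 3) : ℕ) : ℤ) = (t : ℤ)
    rw [hp2]
    push_cast
    linarith [hC]

theorem cCoeff_term_zero (d n A B C : ℕ) (π : Equiv.Perm (Fin 3)) (p2 : ℕ)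
    (hp2 : ((π 2 : Fin 3) : ℕ) = p2) (hC : (C : ℤ) - 2 + (p2 : ℤ) < 0) :
    cCoeff d n (fun i => ((![A, B, C] : Fin 3 → ℕ) i : ℤ) - (i : ℕ) + ((π i : ℕ) : ℤ))
      = 0 := by
  apply cCoeff_zero d n _ 2
  show (C : ℤ) - ((2 : ℕ) : ℤ) + (((π 2 : Fin 3) : ℕ) : ℤ) < 0
  rw [hp2]
  push_cast
  linarith [hC]

set_option maxHeartbeats 1600000 in
theorem case33 (d n : ℕ) (hd : 1 ≤ d) (hn : 1 ≤ n) (h : 9 ≤ d * n) :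
    (Mval 3 3 d n : ℤ) - Mval 2 3 d n - Mval 3 1 d n - Mval 4 2 d n + Mval 4 1 d n
      + Mval 2 2 d n = 0 := by
  rw [Mval_min 3 3 d n (by norm_num), Mval_min 4 2 d n (by norm_num),
    Mval_min 2 3 d n (by norm_num), Mval_min 4 1 d n (by norm_num),
    Mval_min 2 2 d n (by norm_num), Mval_min 3 1 d n (by norm_num)]
  by_cases hd6 : 6 ≤ d <;> by_cases hn6 : 6 ≤ n
  · rw [show min d 6 = 6 from by omega, show min n 6 = 6 from by omega]; decide
  · rw [show min d 6 = 6 from by omega, show min n 6 = n from by omega]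
    interval_cases n <;> decide
  · rw [show min d 6 = d from by omega, show min n 6 = 6 from by omega]
    interval_cases d <;> decide
  · rw [show min d 6 = d from by omega, show min n 6 = n from by omega]
    interval_cases d <;> interval_cases n <;> first | omega | decide

set_option maxHeartbeats 1600000 in
theorem case31 (d n : ℕ) (hd : 1 ≤ d) (hn : 1 ≤ n) (h : 7 ≤ d * n) :
    (Mval 3 1 d n : ℤ) - Mval 2 1 d n - Mval 4 0 d n + Mval 2 0 d n = 0 := by
  rw [Mval_min 3 1 d n (by norm_num), Mval_min 2 1 d n (by norm_num),
    Mval_min 4 0 d n (by norm_num), Mval_min 2 0 d n (by norm_num)]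
  by_cases hd6 : 6 ≤ d <;> by_cases hn6 : 6 ≤ n
  · rw [show min d 6 = 6 from by omega, show min n 6 = 6 from by omega]; decide
  · rw [show min d 6 = 6 from by omega, show min n 6 = n from by omega]
    interval_cases n <;> decide
  · rw [show min d 6 = d from by omega, show min n 6 = 6 from by omega]
    interval_cases d <;> decide
  · rw [show min d 6 = d from by omega, show min n 6 = n from by omega]
    interval_cases d <;> interval_cases n <;> first | omega | decide

set_option maxHeartbeats 1600000 in
theorem case21 (d n : ℕ) (hd : 1 ≤ d) (hn : 1 ≤ n) (h : 5 ≤ d * n) :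
    (Mval 2 1 d n : ℤ) - Mval 1 1 d n - Mval 3 0 d n + Mval 1 0 d n = 0 := by
  rw [Mval_min 2 1 d n (by norm_num), Mval_min 1 1 d n (by norm_num),
    Mval_min 3 0 d n (by norm_num), Mval_min 1 0 d n (by norm_num)]
  by_cases hd6 : 6 ≤ d <;> by_cases hn6 : 6 ≤ n
  · rw [show min d 6 = 6 from by omega, show min n 6 = 6 from by omega]; decide
  · rw [show min d 6 = 6 from by omega, show min n 6 = n from by omega]
    interval_cases n <;> decide
  · rw [show min d 6 = d from by omega, show min n 6 = 6 from by omega]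
    interval_cases d <;> decide
  · rw [show min d 6 = d from by omega, show min n 6 = n from by omega]
    interval_cases d <;> interval_cases n <;> first | omega | decide

set_option maxHeartbeats 1600000 in
theorem case11 (d n : ℕ) (hd : 1 ≤ d) (hn : 1 ≤ n) :
    (Mval 1 1 d n : ℤ) - Mval 0 1 d n - Mval 2 0 d n + Mval 0 0 d n = 0 := by
  rw [Mval_min 1 1 d n (by norm_num), Mval_min 0 1 d n (by norm_num),
    Mval_min 2 0 d n (by norm_num), Mval_min 0 0 d n (by norm_num)]
  by_cases hd6 : 6 ≤ d <;> by_cases hn6 : 6 ≤ n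
  · rw [show min d 6 = 6 from by omega, show min n 6 = 6 from by omega]; decide
  · rw [show min d 6 = 6 from by omega, show min n 6 = n from by omega]
    interval_cases n <;> decide
  · rw [show min d 6 = d from by omega, show min n 6 = 6 from by omega]
    interval_cases d <;> decide
  · rw [show min d 6 = d from by omega, show min n 6 = n from by omega]
    interval_cases d <;> interval_cases n <;> decide

set_option maxHeartbeats 1600000 in
theorem case10 (d n : ℕ) (hd : 1 ≤ d) (hn : 1 ≤ n) :
    (Mval 1 0 d n : ℤ) - Mval 0 0 d n = 0 := by
  rw [Mval_min 1 0 d n (by norm_num), Mval_min 0 0 d n (by norm_num)]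
  by_cases hd6 : 6 ≤ d <;> by_cases hn6 : 6 ≤ n
  · rw [show min d 6 = 6 from by omega, show min n 6 = 6 from by omega]; decide
  · rw [show min d 6 = 6 from by omega, show min n 6 = n from by omega]
    interval_cases n <;> decide
  · rw [show min d 6 = d from by omega, show min n 6 = 6 from by omega]
    interval_cases d <;> decide
  · rw [show min d 6 = d from by omega, show min n 6 = n from by omega]
    interval_cases d <;> interval_cases n <;> decide

end PlethAux

/-- Let `(μ₂,μ₃)` be one of `(3,3), (3,1), (2,1), (1,1), (1,0)`, and let
`d ≥ 1`, `n ≥ 1` be such that `dn − μ₂ − μ₃ ≥ μ₂`.  Then the plethysm coefficient of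
`λ = (dn−μ₂−μ₃, μ₂, μ₃)` vanishes: `a_λ(d[n]) = 0`. -/
theorem aCoeff_vanishes
    (μ₂ μ₃ d n : ℕ)
    (hμ : (μ₂, μ₃) ∈ ([(3, 3), (3, 1), (2, 1), (1, 1), (1, 0)] : List (ℕ × ℕ)))
    (hd : 1 ≤ d) (hn : 1 ≤ n) (h : μ₂ + μ₂ + μ₃ ≤ d * n) :
    aCoeff ![d * n - μ₂ - μ₃, μ₂, μ₃] d n = 0 := by
  open PlethAux in
  simp only [List.mem_cons, List.mem_singleton, Prod.mk.injEq, List.not_mem_nil, or_false] at hμ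
  rcases hμ with ⟨rfl, rfl⟩ | ⟨rfl, rfl⟩ | ⟨rfl, rfl⟩ | ⟨rfl, rfl⟩ | ⟨rfl, rfl⟩
  · -- (3, 3)
    rw [PlethAux.aCoeff_expand,
      PlethAux.cCoeff_term d n (d * n - 3 - 3) 3 3 3 3 1 0 1 2
        (by decide) (by decide) (by decide) (by omega) (by push_cast; omega)
        (by norm_num) (by norm_num),
      PlethAux.cCoeff_term d n (d * n - 3 - 3) 3 3 2 3 (Equiv.swap 0 1) 1 0 2
        (by decide) (by decide) (by decide) (by omega) (by push_cast; omega)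
        (by norm_num) (by norm_num),
      PlethAux.cCoeff_term d n (d * n - 3 - 3) 3 3 3 1 (Equiv.swap 0 2) 2 1 0
        (by decide) (by decide) (by decide) (by omega) (by push_cast; omega)
        (by norm_num) (by norm_num),
      PlethAux.cCoeff_term d n (d * n - 3 - 3) 3 3 4 2 (Equiv.swap 1 2) 0 2 1
        (by decide) (by decide) (by decide) (by omega) (by push_cast; omega)
        (by norm_num) (by norm_num),
      PlethAux.cCoeff_term d n (d * n - 3 - 3) 3 3 4 1 (Equiv.swap 0 1 * Equiv.swap 1 2) 1 2 0
        (by decide) (by decide) (by decide) (by omega) (by push_cast; omega)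
        (by norm_num) (by norm_num),
      PlethAux.cCoeff_term d n (d * n - 3 - 3) 3 3 2 2 (Equiv.swap 1 2 * Equiv.swap 0 1) 2 0 1
        (by decide) (by decide) (by decide) (by omega) (by push_cast; omega)
        (by norm_num) (by norm_num)]
    have := PlethAux.case33 d n hd hn (by omega)
    push_cast at this ⊢
    linarith
  · -- (3, 1)
    rw [PlethAux.aCoeff_expand,
      PlethAux.cCoeff_term d n (d * n - 3 - 1) 3 1 3 1 1 0 1 2
        (by decide) (by decide) (by decide) (by omega) (by push_cast; omega)
        (by norm_num) (by norm_num),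
      PlethAux.cCoeff_term d n (d * n - 3 - 1) 3 1 2 1 (Equiv.swap 0 1) 1 0 2
        (by decide) (by decide) (by decide) (by omega) (by push_cast; omega)
        (by norm_num) (by norm_num),
      PlethAux.cCoeff_term_zero d n (d * n - 3 - 1) 3 1 (Equiv.swap 0 2) 0
        (by decide) (by norm_num),
      PlethAux.cCoeff_term d n (d * n - 3 - 1) 3 1 4 0 (Equiv.swap 1 2) 0 2 1
        (by decide) (by decide) (by decide) (by omega) (by push_cast; omega)
        (by norm_num) (by norm_num),
      PlethAux.cCoeff_term_zero d n (d * n - 3 - 1) 3 1 (Equiv.swap 0 1 * Equiv.swap 1 2) 0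
        (by decide) (by norm_num),
      PlethAux.cCoeff_term d n (d * n - 3 - 1) 3 1 2 0 (Equiv.swap 1 2 * Equiv.swap 0 1) 2 0 1
        (by decide) (by decide) (by decide) (by omega) (by push_cast; omega)
        (by norm_num) (by norm_num)]
    have := PlethAux.case31 d n hd hn (by omega)
    push_cast at this ⊢
    linarith
  · -- (2, 1)
    rw [PlethAux.aCoeff_expand,
      PlethAux.cCoeff_term d n (d * n - 2 - 1) 2 1 2 1 1 0 1 2
        (by decide) (by decide) (by decide) (by omega) (by push_cast; omega)
        (by norm_num) (by norm_num),
      PlethAux.cCoeff_term d n (d * n - 2 - 1) 2 1 1 1 (Equiv.swap 0 1) 1 0 2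
        (by decide) (by decide) (by decide) (by omega) (by push_cast; omega)
        (by norm_num) (by norm_num),
      PlethAux.cCoeff_term_zero d n (d * n - 2 - 1) 2 1 (Equiv.swap 0 2) 0
        (by decide) (by norm_num),
      PlethAux.cCoeff_term d n (d * n - 2 - 1) 2 1 3 0 (Equiv.swap 1 2) 0 2 1
        (by decide) (by decide) (by decide) (by omega) (by push_cast; omega)
        (by norm_num) (by norm_num),
      PlethAux.cCoeff_term_zero d n (d * n - 2 - 1) 2 1 (Equiv.swap 0 1 * Equiv.swap 1 2) 0
        (by decide) (by norm_num),
      PlethAux.cCoeff_term d n (d * n - 2 - 1) 2 1 1 0 (Equiv.swap 1 2 * Equiv.swap 0 1) 2 0 1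
        (by decide) (by decide) (by decide) (by omega) (by push_cast; omega)
        (by norm_num) (by norm_num)]
    have := PlethAux.case21 d n hd hn (by omega)
    push_cast at this ⊢
    linarith
  · -- (1, 1)
    rw [PlethAux.aCoeff_expand,
      PlethAux.cCoeff_term d n (d * n - 1 - 1) 1 1 1 1 1 0 1 2
        (by decide) (by decide) (by decide) (by omega) (by push_cast; omega)
        (by norm_num) (by norm_num),
      PlethAux.cCoeff_term d n (d * n - 1 - 1) 1 1 0 1 (Equiv.swap 0 1) 1 0 2
        (by decide) (by decide) (by decide) (by omega) (by push_cast; omega)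
        (by norm_num) (by norm_num),
      PlethAux.cCoeff_term_zero d n (d * n - 1 - 1) 1 1 (Equiv.swap 0 2) 0
        (by decide) (by norm_num),
      PlethAux.cCoeff_term d n (d * n - 1 - 1) 1 1 2 0 (Equiv.swap 1 2) 0 2 1
        (by decide) (by decide) (by decide) (by omega) (by push_cast; omega)
        (by norm_num) (by norm_num),
      PlethAux.cCoeff_term_zero d n (d * n - 1 - 1) 1 1 (Equiv.swap 0 1 * Equiv.swap 1 2) 0
        (by decide) (by norm_num),
      PlethAux.cCoeff_term d n (d * n - 1 - 1) 1 1 0 0 (Equiv.swap 1 2 * Equiv.swap 0 1) 2 0 1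
        (by decide) (by decide) (by decide) (by omega) (by push_cast; omega)
        (by norm_num) (by norm_num)]
    have := PlethAux.case11 d n hd hn
    push_cast at this ⊢
    linarith
  · -- (1, 0)
    rw [PlethAux.aCoeff_expand,
      PlethAux.cCoeff_term d n (d * n - 1 - 0) 1 0 1 0 1 0 1 2
        (by decide) (by decide) (by decide) (by omega) (by push_cast; omega)
        (by norm_num) (by norm_num),
      PlethAux.cCoeff_term d n (d * n - 1 - 0) 1 0 0 0 (Equiv.swap 0 1) 1 0 2
        (by decide) (by decide) (by decide) (by omega) (by push_cast; omega)
        (by norm_num) (by norm_num),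
      PlethAux.cCoeff_term_zero d n (d * n - 1 - 0) 1 0 (Equiv.swap 0 2) 0
        (by decide) (by norm_num),
      PlethAux.cCoeff_term_zero d n (d * n - 1 - 0) 1 0 (Equiv.swap 1 2) 1
        (by decide) (by norm_num),
      PlethAux.cCoeff_term_zero d n (d * n - 1 - 0) 1 0 (Equiv.swap 0 1 * Equiv.swap 1 2) 0
        (by decide) (by norm_num),
      PlethAux.cCoeff_term_zero d n (d * n - 1 - 0) 1 0 (Equiv.swap 1 2 * Equiv.swap 0 1) 1
        (by decide) (by norm_num)]
    have := PlethAux.case10 d n hd hn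
    push_cast at this ⊢
    linarith
end

section
/- Let m, n, d ≥ 1, let λ = (λ₁,…,λ_m) be a partition of dn with at most m rows, identified with its Young diagram (the set of boxes (s,i) with 1 ≤ i ≤ λ₁ and 1 ≤ s ≤ μ_i, where μ_i := #{j : λ_j ≥ i} is the length of column i). Fix vectors ℓ₁,…,ℓ_n ∈ ℂ^m and a map T from the boxes of λ to {1,…,d} in which every value occurs exactly n times. Fix 0 ≤ k ≤ λ₁ and let λ^{≤k} be the set of boxes in the first k columns. Suppose ψ, ψ' : λ^{≤k} → {1,…,n} are equivalent, i.e. ψ' = ψ ∘ σ for some bijection σ of λ^{≤k} with T ∘ σ = T on λ^{≤k}. Then α(ψ) = α(ψ'), where α(ψ) := Σ_θ ∏_{i=k+1}^{λ₁} det_{θ,i}, the sum being over all proper placements θ of λ whose restriction to λ^{≤k} equals ψ. -/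
open Finset

/-- The length `μ_i = #{j : λ_j ≥ i}` of the `i`-th column of the Young diagram of `λ`. -/
def colLen {m : ℕ} (lam : Fin m → ℕ) (i : ℕ) : ℕ :=
  (Finset.univ.filter fun j => i ≤ lam j).card

lemma colLen_le {m : ℕ} (lam : Fin m → ℕ) (i : ℕ) : colLen lam i ≤ m := by
  classical
  simpa [colLen] using
    (Finset.card_filter_le (Finset.univ : Finset (Fin m)) fun j => i ≤ lam j)

/-- The set of boxes `(s, i)` (row `s` of column `i`, both 1-indexed) of the Young diagram
of `λ`: those with `1 ≤ i`, `1 ≤ s ≤ μ_i`. -/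
def YD {m : ℕ} (lam : Fin m → ℕ) : Finset (ℕ × ℕ) :=
  (Finset.Icc 1 m ×ˢ Finset.Icc 1 (Finset.univ.sup lam)).filter
    fun b => b.1 ≤ colLen lam b.2

/-- A placement `θ` (encoded as a function `ℕ × ℕ → ℕ` on boxes, vanishing off the diagram)
is proper if for every `(i,j) ∈ {1,…,n} × {1,…,d}` there is exactly one box `b`
with `θ b = i` and `T b = j`. -/
def IsProper {m : ℕ} (n d : ℕ) (lam : Fin m → ℕ) (T θ : ℕ × ℕ → ℕ) : Prop :=
  ∀ i ∈ Finset.Icc 1 n, ∀ j ∈ Finset.Icc 1 d,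
    ((YD lam).filter fun b => θ b = i ∧ T b = j).card = 1

/-- `det_{θ,i}`: the determinant of the `μ_i × μ_i` matrix whose `(s,t)` entry is the
`s`-th coordinate of the vector `ℓ_{θ((t,i))}`. -/
noncomputable def detCol {m : ℕ} (lam : Fin m → ℕ) (ℓ : ℕ → Fin m → ℂ)
    (θ : ℕ × ℕ → ℕ) (i : ℕ) : ℂ :=
  Matrix.det (Matrix.of fun s t : Fin (colLen lam i) =>
    ℓ (θ (t.1 + 1, i)) (Fin.castLE (colLen_le lam i) s))

/-- `α(ψ) = Σ_θ ∏_{i=k+1}^{λ₁} det_{θ,i}`, summed over all proper placements `θ` whose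
restriction to the first `k` columns equals `ψ` (placements are encoded as functions
`ℕ × ℕ → ℕ` vanishing off the diagram). -/
noncomputable def alphaVal {m : ℕ} (n d k : ℕ) (lam : Fin m → ℕ) (ℓ : ℕ → Fin m → ℂ)
    (T : ℕ × ℕ → ℕ) (ψ : ℕ × ℕ → ℕ) : ℂ :=
  ∑ᶠ θ ∈ {θ : ℕ × ℕ → ℕ |
      (∀ b, b ∉ YD lam → θ b = 0) ∧ IsProper n d lam T θ ∧
      ∀ b ∈ YD lam, b.2 ≤ k → θ b = ψ b},
    ∏ i ∈ Finset.Icc (k + 1) (Finset.univ.sup lam), detCol lam ℓ θ i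

/-- If `ψ, ψ' : λ^{≤k} → {1,…,n}` are equivalent (i.e. `ψ' = ψ ∘ σ` for a
bijection `σ` of the boxes of the first `k` columns with `T ∘ σ = T`), then `α(ψ) = α(ψ')`. -/
theorem alphaVal_eq_of_equivalent
    {m n d : ℕ} (hm : 1 ≤ m) (hn : 1 ≤ n) (hd : 1 ≤ d)
    (lam : Fin m → ℕ) (hanti : Antitone lam) (hsum : ∑ i, lam i = d * n)
    (ℓ : ℕ → Fin m → ℂ) (T : ℕ × ℕ → ℕ)
    (hT : ∀ b ∈ YD lam, T b ∈ Finset.Icc 1 d)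
    (hTcount : ∀ j ∈ Finset.Icc 1 d, ((YD lam).filter fun b => T b = j).card = n)
    (k : ℕ) (hk : k ≤ lam ⟨0, hm⟩)
    (ψ ψ' : ℕ × ℕ → ℕ)
    (hψ : ∀ b ∈ (YD lam).filter (fun b => b.2 ≤ k), ψ b ∈ Finset.Icc 1 n)
    (hψ' : ∀ b ∈ (YD lam).filter (fun b => b.2 ≤ k), ψ' b ∈ Finset.Icc 1 n)
    (σ : ℕ × ℕ → ℕ × ℕ)
    (hσbij : Set.BijOn σ (((YD lam).filter (fun b => b.2 ≤ k)) : Set (ℕ × ℕ))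
        (((YD lam).filter (fun b => b.2 ≤ k)) : Set (ℕ × ℕ)))
    (hσT : ∀ b ∈ (YD lam).filter (fun b => b.2 ≤ k), T (σ b) = T b)
    (hψψ' : ∀ b ∈ (YD lam).filter (fun b => b.2 ≤ k), ψ' b = ψ (σ b)) :
    alphaVal n d k lam ℓ T ψ = alphaVal n d k lam ℓ T ψ' := by
  classical
  set A : Finset (ℕ × ℕ) := (YD lam).filter (fun b => b.2 ≤ k) with hA
  have hAYD : ∀ b ∈ A, b ∈ YD lam ∧ b.2 ≤ k := fun b hb => Finset.mem_filter.mp hb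
  have hmemA : ∀ b, b ∈ YD lam → b.2 ≤ k → b ∈ A := fun b h1 h2 =>
    Finset.mem_filter.mpr ⟨h1, h2⟩
  have hinv : Set.InvOn (Function.invFunOn σ ↑A) σ ↑A ↑A := hσbij.invOn_invFunOn
  set τ : ℕ × ℕ → ℕ × ℕ := Function.invFunOn σ ↑A with hτdef
  have hτbij : Set.BijOn τ ↑A ↑A := Set.BijOn.symm hinv.symm hσbij
  have hσA : ∀ b ∈ A, σ b ∈ A := fun b hb => hσbij.mapsTo hb
  have hτA : ∀ b ∈ A, τ b ∈ A := fun b hb => hτbij.mapsTo hb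
  have hτσ : ∀ b ∈ A, τ (σ b) = b := fun b hb => hinv.1 hb
  have hστ : ∀ b ∈ A, σ (τ b) = b := fun b hb => hinv.2 hb
  have hτT : ∀ b ∈ A, T (τ b) = T b := by
    intro b hb
    have h := hσT (τ b) (hτA b hb)
    rw [hστ b hb] at h
    exact h.symm
  have hrel' : ∀ b ∈ A, ψ b = ψ' (τ b) := by
    intro b hb
    rw [hψψ' (τ b) (hτA b hb), hστ b hb]
  -- the key transport lemma, applied to (σ,τ,ψ,ψ') and (τ,σ,ψ',ψ)
  have key : ∀ (σ₀ τ₀ : ℕ × ℕ → ℕ × ℕ) (φ φ' : ℕ × ℕ → ℕ),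
      (∀ b ∈ A, σ₀ b ∈ A) → (∀ b ∈ A, τ₀ b ∈ A) →
      (∀ b ∈ A, σ₀ (τ₀ b) = b) → (∀ b ∈ A, τ₀ (σ₀ b) = b) →
      (∀ b ∈ A, T (σ₀ b) = T b) → (∀ b ∈ A, φ' b = φ (σ₀ b)) →
      ∀ θ : ℕ × ℕ → ℕ,
        ((∀ b, b ∉ YD lam → θ b = 0) ∧ IsProper n d lam T θ ∧
          ∀ b ∈ YD lam, b.2 ≤ k → θ b = φ b) →
        ((∀ b, b ∉ YD lam → (if b ∈ A then θ (σ₀ b) else θ b) = 0) ∧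
          IsProper n d lam T (fun b => if b ∈ A then θ (σ₀ b) else θ b) ∧
          ∀ b ∈ YD lam, b.2 ≤ k →
            (if b ∈ A then θ (σ₀ b) else θ b) = φ' b) := by
    intro σ₀ τ₀ φ φ' hσ₀A hτ₀A hστ₀ hτσ₀ hσ₀T hrel θ hθ
    obtain ⟨h0, h1, h2⟩ := hθ
    refine ⟨?_, ?_, ?_⟩
    · intro b hb
      have hbA : b ∉ A := fun h => hb (hAYD b h).1
      rw [if_neg hbA]
      exact h0 b hb
    · intro i hi j hj
      have hcard : ((YD lam).filter fun b =>
            (if b ∈ A then θ (σ₀ b) else θ b) = i ∧ T b = j).card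
          = ((YD lam).filter fun b => θ b = i ∧ T b = j).card := by
        refine Finset.card_bij (fun b _ => if b ∈ A then σ₀ b else b) ?_ ?_ ?_
        · intro b hb
          obtain ⟨hbY, hbP⟩ := Finset.mem_filter.mp hb
          by_cases hbA : b ∈ A
          · rw [if_pos hbA] at hbP ⊢
            exact Finset.mem_filter.mpr
              ⟨(hAYD _ (hσ₀A b hbA)).1, hbP.1, (hσ₀T b hbA) ▸ hbP.2⟩
          · rw [if_neg hbA] at hbP ⊢
            exact Finset.mem_filter.mpr ⟨hbY, hbP⟩
        · intro b1 hb1 b2 hb2 heq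
          by_cases h1A : b1 ∈ A <;> by_cases h2A : b2 ∈ A
          · rw [if_pos h1A, if_pos h2A] at heq
            have := congrArg τ₀ heq
            rwa [hτσ₀ b1 h1A, hτσ₀ b2 h2A] at this
          · rw [if_pos h1A, if_neg h2A] at heq
            exact absurd (heq ▸ hσ₀A b1 h1A) h2A
          · rw [if_neg h1A, if_pos h2A] at heq
            exact absurd (heq ▸ hσ₀A b2 h2A) h1A
          · rwa [if_neg h1A, if_neg h2A] at heq
        · intro c hc
          obtain ⟨hcY, hcP⟩ := Finset.mem_filter.mp hc
          by_cases hcA : c ∈ A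
          · refine ⟨τ₀ c, ?_, ?_⟩
            · have hτcA : τ₀ c ∈ A := hτ₀A c hcA
              refine Finset.mem_filter.mpr ⟨(hAYD _ hτcA).1, ?_⟩
              rw [if_pos hτcA, hστ₀ c hcA]
              have hTτ : T (τ₀ c) = T c := by
                have h := hσ₀T (τ₀ c) hτcA
                rw [hστ₀ c hcA] at h
                exact h.symm
              exact ⟨hcP.1, hTτ.symm ▸ hcP.2⟩
            · rw [if_pos (hτ₀A c hcA), hστ₀ c hcA]
          · refine ⟨c, Finset.mem_filter.mpr ⟨hcY, ?_⟩, by rw [if_neg hcA]⟩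
            rw [if_neg hcA]
            exact hcP
      rw [hcard]
      exact h1 i hi j hj
    · intro b hbY hbk
      have hbA : b ∈ A := hmemA b hbY hbk
      rw [if_pos hbA, hrel b hbA]
      exact h2 (σ₀ b) (hAYD _ (hσ₀A b hbA)).1 (hAYD _ (hσ₀A b hbA)).2
  -- the bijection on placements
  set e : (ℕ × ℕ → ℕ) → (ℕ × ℕ → ℕ) :=
    fun θ b => if b ∈ A then θ (σ b) else θ b with he
  set e' : (ℕ × ℕ → ℕ) → (ℕ × ℕ → ℕ) :=
    fun θ b => if b ∈ A then θ (τ b) else θ b with he'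
  have hee' : ∀ θ, e' (e θ) = θ := by
    intro θ
    funext b
    by_cases hbA : b ∈ A
    · simp only [he, he', if_pos hbA, if_pos (hτA b hbA), hστ b hbA]
    · simp only [he, he', if_neg hbA]
  have hee : ∀ θ, e (e' θ) = θ := by
    intro θ
    funext b
    by_cases hbA : b ∈ A
    · simp only [he, he', if_pos hbA, if_pos (hσA b hbA), hτσ b hbA]
    · simp only [he, he', if_neg hbA]
  unfold alphaVal
  refine finsum_mem_eq_of_bijOn e ⟨?_, ?_, ?_⟩ ?_
  · intro θ hθ
    simp only [Set.mem_setOf_eq] at hθ ⊢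
    exact key σ τ ψ ψ' hσA hτA hστ hτσ hσT hψψ' θ hθ
  · intro θ1 _ θ2 _ heq
    calc θ1 = e' (e θ1) := (hee' θ1).symm
    _ = e' (e θ2) := by rw [heq]
    _ = θ2 := hee' θ2
  · intro θ' hθ'
    simp only [Set.mem_setOf_eq] at hθ'
    exact ⟨e' θ', key τ σ ψ' ψ hτA hσA hτσ hστ hτT hrel' θ' hθ', hee θ'⟩
  · intro θ _
    refine Finset.prod_congr rfl fun i hi => ?_
    have hik : ¬ i ≤ k := by
      have := (Finset.mem_Icc.mp hi).1; omega
    unfold detCol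
    apply congrArg Matrix.det
    ext s t
    simp only [Matrix.of_apply]
    have hnA : ((t : ℕ) + 1, i) ∉ A := fun h => hik (hAYD _ h).2
    simp only [he, if_neg hnA]
end
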